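/- arXiv:2010.09448 — 10 statements merged into one kernel-verified Lean document; each statement's English description precedes it below -/
import Mathlib

section
/- Let q = 2^m with m ≥ 2 and let c ∈ GF(q^2)* with c^{q+1} ≠ 1. Then for every u ∈ GF(q^2) with u^{q+1} = 1, one has (u + c^q)/(cu + 1) = Σ_{i=1}^{q} c^{i-1} u^i. -/
/-- Let `q = 2^m` with `m ≥ 2` and `c ∈ GF(q^2)*` with `c^(q+1) ≠ 1`. Then for every
`u ∈ GF(q^2)` with `u^(q+1) = 1`, one has `(u + c^q)/(cu + 1) = ∑_{i=1}^{q} c^(i-1) u^i`. -/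
theorem stmt1 (m q : ℕ) (hm : 2 ≤ m) (hq : q = 2 ^ m) (F : Type*) [Field F] [Fintype F]
    (hF : Fintype.card F = q ^ 2) (c : F) (hc0 : c ≠ 0) (hc : c ^ (q + 1) ≠ 1)
    (u : F) (hu : u ^ (q + 1) = 1) :
    (u + c ^ q) / (c * u + 1) = ∑ i ∈ Finset.Icc 1 q, c ^ (i - 1) * u ^ i := by
  -- characteristic 2
  have hchar2 : ringChar F = 2 := by
    obtain ⟨n, hn⟩ := FiniteField.card F (ringChar F)
    have hprime : (ringChar F).Prime := CharP.char_is_prime F (ringChar F)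
    have hdvd : ringChar F ∣ 2 ^ (m * 2) := by
      have : (2 : ℕ) ^ (m * 2) = ringChar F ^ (n : ℕ) := by
        rw [pow_mul, ← hq, ← hF, hn.2]
      rw [this]
      exact dvd_pow_self _ n.ne_zero
    exact (Nat.prime_dvd_prime_iff_eq hprime Nat.prime_two).mp (hprime.dvd_of_dvd_pow hdvd)
  haveI : CharP F 2 := hchar2 ▸ ringChar.charP F
  have hden : c * u + 1 ≠ 0 := by
    intro h
    have hcu : c * u = 1 := by
      have h2 : c * u = -1 := by linear_combination h
      rw [h2, CharTwo.neg_eq]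
    apply hc
    have h1 : c ^ (q + 1) * u ^ (q + 1) = 1 := by
      rw [← mul_pow, hcu, one_pow]
    rwa [hu, mul_one] at h1
  have hsum : ∑ i ∈ Finset.Icc 1 q, c ^ (i - 1) * u ^ i
      = ∑ j ∈ Finset.range q, c ^ j * u ^ (j + 1) := by
    rw [← Finset.Ico_add_one_right_eq_Icc, Finset.sum_Ico_eq_sum_range]
    simp [add_comm]
  rw [div_eq_iff hden, hsum]
  have key : (∑ j ∈ Finset.range q, c ^ j * u ^ (j + 1)) * (c * u + 1)
      = c ^ q * u ^ (q + 1) - c ^ 0 * u ^ (0 + 1) := by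
    rw [Finset.sum_mul, ← Finset.sum_range_sub (fun j => c ^ j * u ^ (j + 1)) q]
    apply Finset.sum_congr rfl
    intro j _
    rw [CharTwo.sub_eq_add]
    ring
  rw [key, hu, CharTwo.sub_eq_add]
  ring
end

section
/- Let q = 2^m with m ≥ 2, let c ∈ GF(q^2)* with c^{q+1} ≠ 1, and let e be an integer with 1 ≤ e ≤ q. If a_0 + a_1 u + ... + a_q u^q is the polynomial expansion over U_{q+1} of the function u ↦ ((u + c^q)/(cu + 1))^e, then a_0 = 0 and a_1 = c^{q(e-1)}. -/
/-!
Since `|U_{q+1}| = q + 1 = 1` in characteristic 2, the coefficients are the discrete Fourier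
coefficients `a_k = ∑_{u ∈ U} f(u) u^{-k}`. The Möbius map `φ u = (u + c^q) / (c u + 1)` is an
involution of `U_{q+1}`: its matrix squares to `(1 + c^{q+1}) I` in characteristic 2, and the
Frobenius `x ↦ x^q` shows `φ(u)^{q+1} = 1`. Substituting `u ↦ φ u` turns `a_0` into the power
sum `∑ v^e = 0`, and `a_1` into `∑ v^e (c v + 1) / (v + c^q)`, which the geometric expansion of
`1 / (w - v)` over the roots of unity evaluates to `c^{q(e-1)}`.
-/

open Polynomial Finset

namespace IsPrimitiveRoot

variable {F : Type*} [Field F] [DecidableEq F] {n : ℕ} {ζ : F}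

theorem nthRootsFinset_one_eq_image_pow (hζ : IsPrimitiveRoot ζ n) :
    nthRootsFinset n (1 : F) = (range n).image (ζ ^ ·) := by
  rcases n.eq_zero_or_pos with rfl | hn
  · simp
  have : NeZero n := ⟨hn.ne'⟩
  ext x
  rw [Polynomial.mem_nthRootsFinset hn, mem_image]
  constructor
  · intro hx
    obtain ⟨i, hi, rfl⟩ := hζ.eq_pow_of_pow_eq_one hx
    exact ⟨i, mem_range.mpr hi, rfl⟩
  · rintro ⟨i, -, rfl⟩
    rw [← pow_mul, mul_comm, pow_mul, hζ.pow_eq_one, one_pow]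

theorem sum_nthRootsFinset_pow (hζ : IsPrimitiveRoot ζ n) (j : ℕ) :
    ∑ u ∈ nthRootsFinset n (1 : F), u ^ j = if n ∣ j then (n : F) else 0 := by
  rw [hζ.nthRootsFinset_one_eq_image_pow, sum_image fun i hi k hk h => hζ.injOn_pow hi hk h]
  simp_rw [← pow_mul, mul_comm _ j, pow_mul]
  split_ifs with h
  · simp [(hζ.pow_eq_one_iff_dvd j).mpr h]
  · have hζj : ζ ^ j ≠ 1 := fun h' => h ((hζ.pow_eq_one_iff_dvd j).mp h')
    rw [geom_sum_eq hζj, ← pow_mul, mul_comm, pow_mul, hζ.pow_eq_one, one_pow, sub_self,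
      zero_div]

theorem sum_nthRootsFinset_pow_of_lt_two_mul (hζ : IsPrimitiveRoot ζ n) {j : ℕ} (hj0 : 0 < j)
    (hj : j < 2 * n) :
    ∑ u ∈ nthRootsFinset n (1 : F), u ^ j = if j = n then (n : F) else 0 := by
  rw [hζ.sum_nthRootsFinset_pow]
  congr 1
  exact propext ⟨(Nat.eq_of_dvd_of_lt_two_mul hj0.ne' · hj), fun h => h ▸ dvd_rfl⟩

theorem sum_mul_inv_pow_eq_mul_coeff (hζ : IsPrimitiveRoot ζ n) {f : F → F} {a : ℕ → F}
    (hf : ∀ u ∈ nthRootsFinset n (1 : F), f u = ∑ i ∈ range n, a i * u ^ i) {k : ℕ}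
    (hk : k < n) :
    ∑ u ∈ nthRootsFinset n (1 : F), f u * (u ^ k)⁻¹ = n * a k := by
  have hinv : ∀ u ∈ nthRootsFinset n (1 : F), (u ^ k)⁻¹ = u ^ (n - k) :=
    fun u hu => inv_eq_of_mul_eq_one_right <| by
      rw [← pow_add, Nat.add_sub_cancel' hk.le,
        (Polynomial.mem_nthRootsFinset (by omega) 1).mp hu]
  calc ∑ u ∈ nthRootsFinset n (1 : F), f u * (u ^ k)⁻¹
      = ∑ u ∈ nthRootsFinset n (1 : F), ∑ i ∈ range n, a i * u ^ (i + (n - k)) :=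
        sum_congr rfl fun u hu => by
          rw [hf u hu, hinv u hu, sum_mul]
          simp_rw [pow_add, mul_assoc]
    _ = ∑ i ∈ range n, a i * ∑ u ∈ nthRootsFinset n (1 : F), u ^ (i + (n - k)) := by
        rw [sum_comm]
        simp_rw [mul_sum]
    _ = ∑ i ∈ range n, if i = k then (n : F) * a k else 0 := by
        refine sum_congr rfl fun i hi => ?_
        have hik : i + (n - k) = n ↔ i = k := by omega
        rw [hζ.sum_nthRootsFinset_pow_of_lt_two_mul (by omega)
          (by have := mem_range.mp hi; omega)]
        simp only [hik]
        split_ifs with h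
        · rw [h, mul_comm]
        · rw [mul_zero]
    _ = n * a k := by rw [sum_ite_eq', if_pos (mem_range.mpr hk)]

theorem sum_pow_div_sub (hζ : IsPrimitiveRoot ζ n) {w : F} (hw : w ^ n ≠ 1) {j : ℕ}
    (hj0 : 0 < j) (hjn : j ≤ n) :
    ∑ v ∈ nthRootsFinset n (1 : F), v ^ j / (w - v) = n * w ^ (j - 1) / (w ^ n - 1) := by
  have hwn : w ^ n - 1 ≠ 0 := sub_ne_zero.mpr hw
  have hgeom : ∀ v ∈ nthRootsFinset n (1 : F),
      v ^ j / (w - v) = (∑ i ∈ range n, w ^ i * v ^ (j + (n - 1 - i))) / (w ^ n - 1) := by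
    intro v hv
    have hvn : v ^ n = 1 := (Polynomial.mem_nthRootsFinset (by omega) 1).mp hv
    have hwv : w - v ≠ 0 := fun h => hw (by rw [sub_eq_zero.mp h, hvn])
    rw [div_eq_div_iff hwv hwn, ← hvn, ← geom_sum₂_mul, ← mul_assoc, mul_sum]
    congr 1
    exact sum_congr rfl fun i _ => by ring
  rw [sum_congr rfl hgeom, ← sum_div, sum_comm]
  simp_rw [← mul_sum]
  rw [sum_congr rfl fun i hi => by
    rw [hζ.sum_nthRootsFinset_pow_of_lt_two_mul (by omega) (by have := mem_range.mp hi; omega)]]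
  congr 1
  rw [sum_eq_single_of_mem (j - 1) (mem_range.mpr (by omega)) fun i hi hij => by
    rw [if_neg (by have := mem_range.mp hi; omega), mul_zero], if_pos (by omega), mul_comm]

end IsPrimitiveRoot

theorem FiniteField.exists_isPrimitiveRoot_of_dvd {F : Type*} [Field F] [Fintype F] {n : ℕ}
    (hn : n ∣ Fintype.card F - 1) : ∃ ζ : F, IsPrimitiveRoot ζ n := by
  classical
  obtain ⟨g, hg⟩ := IsCyclic.exists_ofOrder_eq_natCard (α := Fˣ)
  rw [Nat.card_eq_fintype_card, Fintype.card_units] at hg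
  have hζ : IsPrimitiveRoot (g : F) (Fintype.card F - 1) :=
    IsPrimitiveRoot.coe_units_iff.mpr (hg ▸ IsPrimitiveRoot.orderOf g)
  obtain ⟨k, hk⟩ := hn
  exact ⟨_, hζ.pow (Nat.sub_pos_of_lt Fintype.one_lt_card) (hk.trans (mul_comm _ _))⟩

section Mobius

variable {F : Type*} [Field F] [CharP F 2] {q : ℕ} {c u : F}

theorem CharTwo.natCast_add_one_of_eq_two_pow {m : ℕ} (hq : q = 2 ^ m) (hm : m ≠ 0) :
    ((q + 1 : ℕ) : F) = 1 := by
  simp [hq, hm]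

def mobius (q : ℕ) (c u : F) : F := (u + c ^ q) / (c * u + 1)

theorem mobius_mobius (hc : c ^ (q + 1) ≠ 1) (hu : c * u + 1 ≠ 0) :
    mobius q c (mobius q c u) = u := by
  have h2 : (2 : F) = 0 := CharTwo.two_eq_zero
  have hcc : c * c ^ q + 1 ≠ 0 := by rwa [← pow_succ', Ne, CharTwo.add_eq_zero]
  have hnum : (u + c ^ q) / (c * u + 1) + c ^ q = u * (c * c ^ q + 1) / (c * u + 1) := by
    rw [eq_div_iff hu, add_mul, div_mul_cancel₀ _ hu]
    linear_combination c ^ q * h2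
  have hden : c * ((u + c ^ q) / (c * u + 1)) + 1 = (c * c ^ q + 1) / (c * u + 1) := by
    rw [eq_div_iff hu, add_mul, mul_assoc, div_mul_cancel₀ _ hu]
    linear_combination c * u * h2
  rw [mobius, mobius, hnum, hden, div_div_div_cancel_right₀ hu, mul_div_cancel_right₀ _ hcc]

theorem mul_add_one_ne_zero_of_pow_eq_one (hc : c ^ (q + 1) ≠ 1) (hu : u ^ (q + 1) = 1) :
    c * u + 1 ≠ 0 := by
  intro h
  rw [CharTwo.add_eq_zero] at h
  apply hc
  calc c ^ (q + 1) = (c * u) ^ (q + 1) := by rw [mul_pow, hu, mul_one]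
    _ = 1 := by rw [h, one_pow]

theorem mobius_pow_succ {m : ℕ} (hq : q = 2 ^ m) (hcq : c ^ q ^ 2 = c) (hc : c ^ (q + 1) ≠ 1)
    (hu : u ^ (q + 1) = 1) : mobius q c u ^ (q + 1) = 1 := by
  have hfrob : ∀ x y : F, (x + y) ^ q = x ^ q + y ^ q :=
    fun x y => hq ▸ add_pow_char_pow x y 2 m
  have key : (u + c ^ q) ^ (q + 1) = (c * u + 1) ^ (q + 1) := by
    rw [pow_succ, pow_succ, hfrob, hfrob, ← pow_mul, ← sq, hcq, mul_pow, one_pow]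
    linear_combination (1 - c ^ (q + 1)) * hu
  rw [mobius, div_pow, key, div_self (pow_ne_zero _ (mul_add_one_ne_zero_of_pow_eq_one hc hu))]

theorem sum_comp_mobius [DecidableEq F] {m : ℕ} (hq : q = 2 ^ m) (hcq : c ^ q ^ 2 = c)
    (hc : c ^ (q + 1) ≠ 1) (g : F → F) :
    ∑ u ∈ nthRootsFinset (q + 1) (1 : F), g (mobius q c u) =
      ∑ u ∈ nthRootsFinset (q + 1) (1 : F), g u := by
  have hU : ∀ u, u ∈ nthRootsFinset (q + 1) (1 : F) ↔ u ^ (q + 1) = 1 :=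
    fun u => mem_nthRootsFinset q.succ_pos 1
  have hmaps :
      ∀ u ∈ nthRootsFinset (q + 1) (1 : F), mobius q c u ∈ nthRootsFinset (q + 1) (1 : F) :=
    fun u hu => (hU _).mpr (mobius_pow_succ hq hcq hc ((hU u).mp hu))
  have hinv : ∀ u ∈ nthRootsFinset (q + 1) (1 : F), mobius q c (mobius q c u) = u :=
    fun u hu => mobius_mobius hc (mul_add_one_ne_zero_of_pow_eq_one hc ((hU u).mp hu))
  exact sum_nbij' _ _ hmaps hmaps hinv hinv fun _ _ => rfl

theorem sum_pow_mul_inv_mobius [DecidableEq F] {m e : ℕ} {ζ : F}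
    (hζ : IsPrimitiveRoot ζ (q + 1)) (hq : q = 2 ^ m) (hm : m ≠ 0) (hcq : c ^ q ^ 2 = c)
    (hc : c ^ (q + 1) ≠ 1) (he1 : 1 ≤ e) (heq : e ≤ q) :
    ∑ v ∈ nthRootsFinset (q + 1) (1 : F), v ^ e * (mobius q c v)⁻¹ = c ^ (q * (e - 1)) := by
  have hq1 : ((q + 1 : ℕ) : F) = 1 := CharTwo.natCast_add_one_of_eq_two_pow hq hm
  have hbq : (c ^ q) ^ (q + 1) = c ^ (q + 1) := by
    rw [← pow_mul, show q * (q + 1) = q ^ 2 + q by ring, pow_add, hcq, ← pow_succ']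
  have hsplit : ∀ v : F, v ^ e * (mobius q c v)⁻¹ =
      c * (v ^ (e + 1) / (c ^ q - v)) + v ^ e / (c ^ q - v) := fun v => by
    rw [mobius, inv_div, CharTwo.sub_eq_add, add_comm (c ^ q)]
    ring
  have hb : (c ^ q) ^ (q + 1) ≠ 1 := hbq ▸ hc
  rw [sum_congr rfl fun v _ => hsplit v, sum_add_distrib, ← mul_sum,
    hζ.sum_pow_div_sub hb (by omega) (by omega), hζ.sum_pow_div_sub hb he1 (by omega), hq1,
    hbq, Nat.add_sub_cancel, pow_mul]
  have hden : c ^ (q + 1) - 1 ≠ 0 := sub_ne_zero.mpr hc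
  obtain ⟨d, rfl⟩ : ∃ d, e = d + 1 := ⟨e - 1, by omega⟩
  field_simp
  rw [Nat.add_sub_cancel]
  linear_combination (c ^ q) ^ d * CharTwo.two_eq_zero (R := F)

end Mobius

theorem stmt3_general (m q : ℕ) (hm : 2 ≤ m) (hq : q = 2 ^ m) (F : Type*) [Field F] [Fintype F]
    (hF : Fintype.card F = q ^ 2) (c : F) (hc : c ^ (q + 1) ≠ 1)
    (e : ℕ) (he1 : 1 ≤ e) (heq : e ≤ q) (a : ℕ → F)
    (ha : ∀ u : F, u ^ (q + 1) = 1 →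
      ((u + c ^ q) / (c * u + 1)) ^ e = ∑ i ∈ Finset.range (q + 1), a i * u ^ i) :
    a 0 = 0 ∧ a 1 = c ^ (q * (e - 1)) := by
  classical
  have hm0 : m ≠ 0 := by omega
  have : CharP F 2 := ringChar.of_eq <| FiniteField.even_card_iff_char_two.mpr <| by
    simp [hF, hq, ← pow_mul, Nat.pow_mod, hm0]
  obtain ⟨ζ, hζ⟩ := FiniteField.exists_isPrimitiveRoot_of_dvd (F := F) (n := q + 1) <| by
    simpa [hF] using Dvd.intro _ (Nat.sq_sub_sq q 1).symm
  have hcq : c ^ q ^ 2 = c := hF ▸ FiniteField.pow_card c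
  have hU : ∀ u, u ∈ nthRootsFinset (q + 1) (1 : F) ↔ u ^ (q + 1) = 1 :=
    fun u => mem_nthRootsFinset q.succ_pos 1
  have hf : ∀ u ∈ nthRootsFinset (q + 1) (1 : F),
      mobius q c u ^ e = ∑ i ∈ range (q + 1), a i * u ^ i := fun u hu => ha u ((hU u).mp hu)
  have ha0 := hζ.sum_mul_inv_pow_eq_mul_coeff hf q.succ_pos
  have ha1 := hζ.sum_mul_inv_pow_eq_mul_coeff hf (by omega : 1 < q + 1)
  rw [CharTwo.natCast_add_one_of_eq_two_pow hq hm0, one_mul] at ha0 ha1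
  constructor
  · rw [← ha0]
    simp only [pow_zero, inv_one, mul_one]
    rw [sum_comp_mobius hq hcq hc (· ^ e),
      hζ.sum_nthRootsFinset_pow_of_lt_two_mul (by omega) (by omega), if_neg (by omega)]
  · rw [← ha1, ← sum_pow_mul_inv_mobius hζ hq hm0 hcq hc he1 heq,
      ← sum_comp_mobius hq hcq hc fun v => v ^ e * (mobius q c v)⁻¹]
    refine sum_congr rfl fun u hu => ?_
    rw [pow_one, mobius_mobius hc (mul_add_one_ne_zero_of_pow_eq_one hc ((hU u).mp hu))]

/-- Let `q = 2^m` with `m ≥ 2`, `c ∈ GF(q^2)*` with `c^(q+1) ≠ 1`, and `1 ≤ e ≤ q`.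
If `a_0 + a_1 u + ⋯ + a_q u^q` is the polynomial expansion over `U_{q+1}` of
`u ↦ ((u + c^q)/(cu + 1))^e`, then `a_0 = 0` and `a_1 = c^{q(e-1)}`. -/
theorem stmt3 (m q : ℕ) (hm : 2 ≤ m) (hq : q = 2 ^ m) (F : Type*) [Field F] [Fintype F]
    (hF : Fintype.card F = q ^ 2) (c : F) (hc0 : c ≠ 0) (hc : c ^ (q + 1) ≠ 1)
    (e : ℕ) (he1 : 1 ≤ e) (heq : e ≤ q) (a : ℕ → F)
    (ha : ∀ u : F, u ^ (q + 1) = 1 →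
      ((u + c ^ q) / (c * u + 1)) ^ e = ∑ i ∈ Finset.range (q + 1), a i * u ^ i) :
    a 0 = 0 ∧ a 1 = c ^ (q * (e - 1)) :=
  stmt3_general m q hm hq F hF c hc e he1 heq a ha
end

section
/- Let q = 2^m with m ≥ 2. Suppose a, b, c, d ∈ GF(q^2) satisfy ad + bc ≠ 0 and ((au + b)/(cu + d))^{q+1} = 1 for all u ∈ U_{q+1}. Then ab^q + cd^q = 0, a^q b + c^q d = 0, and a^{q+1} + b^{q+1} + c^{q+1} + d^{q+1} = 0. -/
/-- Let `q = 2^m` with `m ≥ 2`. Suppose `a, b, c, d ∈ GF(q^2)` satisfy `ad + bc ≠ 0` and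
`((au + b)/(cu + d))^{q+1} = 1` for all `u ∈ U_{q+1}` (with `cu + d ≠ 0` there). Then
`ab^q + cd^q = 0`, `a^q b + c^q d = 0`, and `a^{q+1} + b^{q+1} + c^{q+1} + d^{q+1} = 0`. -/
theorem stmt5 (m q : ℕ) (hm : 2 ≤ m) (hq : q = 2 ^ m) (F : Type*) [Field F] [Fintype F]
    (hF : Fintype.card F = q ^ 2) (a b c d : F) (hdet : a * d + b * c ≠ 0)
    (hden : ∀ u : F, u ^ (q + 1) = 1 → c * u + d ≠ 0)
    (hmap : ∀ u : F, u ^ (q + 1) = 1 → ((a * u + b) / (c * u + d)) ^ (q + 1) = 1) :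
    a * b ^ q + c * d ^ q = 0 ∧ a ^ q * b + c ^ q * d = 0 ∧
      a ^ (q + 1) + b ^ (q + 1) + c ^ (q + 1) + d ^ (q + 1) = 0 := by
  classical
  have hq4 : 4 ≤ q := by
    rw [hq]
    calc (4 : ℕ) = 2 ^ 2 := by norm_num
    _ ≤ 2 ^ m := Nat.pow_le_pow_right (by norm_num) hm
  -- characteristic 2
  haveI : CharP F (ringChar F) := ringChar.charP F
  have hchar2 : ringChar F = 2 := by
    obtain ⟨n, hp, hcard⟩ := FiniteField.card F (ringChar F)
    have hdvd : ringChar F ∣ 2 ^ (2 * m) := by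
      have heq : ringChar F ^ (n : ℕ) = 2 ^ (2 * m) := by
        rw [← hcard, hF, hq, ← pow_mul, mul_comm]
      rw [← heq]
      exact dvd_pow_self _ (by positivity)
    have h2 : ringChar F ∣ 2 := hp.dvd_of_dvd_pow hdvd
    exact (Nat.prime_dvd_prime_iff_eq hp Nat.prime_two).mp h2
  haveI : CharP F 2 := hchar2 ▸ ringChar.charP F
  have htwo : (2 : F) = 0 := by exact_mod_cast CharP.cast_eq_zero F 2
  have hfrob : ∀ x y : F, (x + y) ^ q = x ^ q + y ^ q := by
    intro x y
    rw [hq]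
    exact add_pow_char_pow x y 2 m
  -- the key pointwise equation
  have key : ∀ u : F, u ^ (q + 1) = 1 →
      (a * b ^ q + c * d ^ q) * u ^ 2
        + (a ^ (q + 1) + b ^ (q + 1) + c ^ (q + 1) + d ^ (q + 1)) * u
        + (a ^ q * b + c ^ q * d) = 0 := by
    intro u hu
    have hcd : c * u + d ≠ 0 := hden u hu
    have hcdp : (c * u + d) ^ (q + 1) ≠ 0 := pow_ne_zero _ hcd
    have hE : (a * u + b) ^ (q + 1) = (c * u + d) ^ (q + 1) := by
      have := hmap u hu
      rw [div_pow, div_eq_one_iff_eq hcdp] at this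
      exact this
    have hvu : u ^ q * u = 1 := by rw [← pow_succ]; exact hu
    have hE' : (a ^ q * u ^ q + b ^ q) * (a * u + b)
        = (c ^ q * u ^ q + d ^ q) * (c * u + d) := by
      have h1 : (a * u + b) ^ (q + 1) = (a ^ q * u ^ q + b ^ q) * (a * u + b) := by
        rw [pow_succ, hfrob, mul_pow]
      have h2 : (c * u + d) ^ (q + 1) = (c ^ q * u ^ q + d ^ q) * (c * u + d) := by
        rw [pow_succ, hfrob, mul_pow]
      rw [h1, h2] at hE; exact hE
    linear_combination u * hE'
      + (c ^ q * c * u + c ^ q * d - a ^ q * a * u - a ^ q * b) * hvu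
      + (c * d ^ q * u ^ 2 + d ^ q * d * u + c ^ q * c * u + c ^ q * d) * htwo
  -- find an element of order q+1 in the unit group
  obtain ⟨g, hg⟩ := IsCyclic.exists_ofOrder_eq_natCard (α := Fˣ)
  have hcardU : Nat.card Fˣ = q ^ 2 - 1 := by
    rw [Nat.card_eq_fintype_card, Fintype.card_units, hF]
  set h : Fˣ := g ^ (q - 1) with hh
  have horderh : orderOf h = q + 1 := by
    rw [hh, orderOf_pow, hg, hcardU]
    have hfact : q ^ 2 - 1 = (q - 1) * (q + 1) := by
      zify [show 1 ≤ q by omega, show 1 ≤ q ^ 2 by nlinarith]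
      ring
    have h1 : Nat.gcd (q ^ 2 - 1) (q - 1) = q - 1 :=
      Nat.gcd_eq_right ⟨q + 1, hfact⟩
    rw [h1, hfact, Nat.mul_div_cancel_left _ (by omega : 0 < q - 1)]
  have hpow : ∀ k : ℕ, ((h ^ k : Fˣ) : F) ^ (q + 1) = 1 := by
    intro k
    have : (h ^ k) ^ (q + 1) = 1 := by
      rw [← pow_mul, mul_comm k (q + 1), pow_mul, ← horderh, pow_orderOf_eq_one, one_pow]
    calc ((h ^ k : Fˣ) : F) ^ (q + 1) = (((h ^ k) ^ (q + 1) : Fˣ) : F) := by push_cast; ring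
    _ = 1 := by rw [this]; simp
  -- the polynomial
  set A : F := a * b ^ q + c * d ^ q with hA
  set B : F := a ^ (q + 1) + b ^ (q + 1) + c ^ (q + 1) + d ^ (q + 1) with hB
  set Cc : F := a ^ q * b + c ^ q * d with hC
  set p : Polynomial F := Polynomial.C A * Polynomial.X ^ 2 + Polynomial.C B * Polynomial.X
      + Polynomial.C Cc with hp
  have heval : ∀ u : F, u ^ (q + 1) = 1 → p.eval u = 0 := by
    intro u hu
    have := key u hu
    simp only [hp, Polynomial.eval_add, Polynomial.eval_mul, Polynomial.eval_C,
      Polynomial.eval_pow, Polynomial.eval_X]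
    linear_combination this
  -- three distinct roots
  have hne1 : h ≠ 1 := by
    intro hcon
    rw [hcon, orderOf_one] at horderh; omega
  have h2ne1 : h ^ 2 ≠ 1 := by
    intro hcon
    have hd := orderOf_dvd_of_pow_eq_one hcon
    rw [horderh] at hd
    have := Nat.le_of_dvd (by norm_num) hd
    omega
  have e1 : ((h : F)) ≠ 1 := fun hc => hne1 (Units.ext (by simpa using hc))
  have e2 : ((h : F)) ^ 2 ≠ 1 := fun hc => h2ne1 (Units.ext (by push_cast; simpa using hc))
  have e3 : ((h : F)) ≠ ((h : F)) ^ 2 := by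
    intro hc
    have hu : h = h ^ 2 := Units.ext (by push_cast; simpa using hc)
    apply hne1
    have : h * 1 = h * h := by rw [mul_one, ← sq]; exact hu
    exact (mul_left_cancel this).symm
  set s : Finset F := {(1 : F), (h : F), ((h ^ 2 : Fˣ) : F)} with hs
  have hcards : 3 ≤ s.card := by
    rw [hs]
    rw [Finset.card_insert_of_notMem (by simp [e1.symm, e2.symm] : (1:F) ∉ ({(h : F), ((h ^ 2 : Fˣ) : F)} : Finset F)),
      Finset.card_insert_of_notMem (by simp [e3] : ((h:F)) ∉ ({((h ^ 2 : Fˣ) : F)} : Finset F)),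
      Finset.card_singleton]
  have hpzero : p = 0 := by
    apply Polynomial.eq_zero_of_natDegree_lt_card_of_eval_eq_zero' p s
    · intro u hu
      apply heval
      rw [hs] at hu
      simp only [Finset.mem_insert, Finset.mem_singleton] at hu
      rcases hu with rfl | rfl | rfl
      · exact one_pow _
      · have := hpow 1; rwa [pow_one] at this
      · exact hpow 2
    · have hdeg : p.natDegree ≤ 2 := by
        rw [hp]
        compute_degree
      omega
  refine ⟨?_, ?_, ?_⟩
  · have h2 := congrArg (fun r => Polynomial.coeff r 2) hpzero
    simp only [hp, Polynomial.coeff_add, Polynomial.coeff_C_mul, Polynomial.coeff_X_pow,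
      Polynomial.coeff_X, Polynomial.coeff_C, Polynomial.coeff_zero] at h2
    norm_num at h2
    exact h2
  · have h0 := congrArg (fun r => Polynomial.coeff r 0) hpzero
    simp only [hp, Polynomial.coeff_add, Polynomial.coeff_C_mul, Polynomial.coeff_X_pow,
      Polynomial.coeff_X, Polynomial.coeff_C, Polynomial.coeff_zero] at h0
    norm_num at h0
    exact h0
  · have h1 := congrArg (fun r => Polynomial.coeff r 1) hpzero
    simp only [hp, Polynomial.coeff_add, Polynomial.coeff_C_mul, Polynomial.coeff_X_pow,
      Polynomial.coeff_X, Polynomial.coeff_C, Polynomial.coeff_zero] at h1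
    norm_num at h1
    exact h1
end

section
/- The setwise stabilizer of U_{q+1} in PGL_2(GF(q^2)) acts sharply 3-transitively on U_{q+1}, where q = 2^m with m ≥ 2. -/
/-- Two fractional linear transformations with nonzero determinant that agree (in
cross-multiplied form) at three distinct points have proportional matrices. -/
private lemma rigidity3 {F : Type*} [Field F] (v₁ v₂ v₃ a b c d a' b' c' d' : F)
    (h12 : v₁ ≠ v₂) (h13 : v₁ ≠ v₃) (h23 : v₂ ≠ v₃)
    (hdet : a * d - b * c ≠ 0) (hdet' : a' * d' - b' * c' ≠ 0)
    (hc1 : (a * v₁ + b) * (c' * v₁ + d') = (a' * v₁ + b') * (c * v₁ + d))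
    (hc2 : (a * v₂ + b) * (c' * v₂ + d') = (a' * v₂ + b') * (c * v₂ + d))
    (hc3 : (a * v₃ + b) * (c' * v₃ + d') = (a' * v₃ + b') * (c * v₃ + d)) :
    ∃ lam : F, lam ≠ 0 ∧ a' = lam * a ∧ b' = lam * b ∧ c' = lam * c ∧ d' = lam * d := by
  have f12 : (v₁ - v₂) * ((a*c' - a'*c)*(v₁+v₂) + (a*d' + b*c' - a'*d - b'*c)) = 0 := by
    linear_combination hc1 - hc2
  have f13 : (v₁ - v₃) * ((a*c' - a'*c)*(v₁+v₃) + (a*d' + b*c' - a'*d - b'*c)) = 0 := by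
    linear_combination hc1 - hc3
  have g12 := (mul_eq_zero.mp f12).resolve_left (sub_ne_zero.mpr h12)
  have g13 := (mul_eq_zero.mp f13).resolve_left (sub_ne_zero.mpr h13)
  have f23 : (v₂ - v₃) * (a*c' - a'*c) = 0 := by linear_combination g12 - g13
  have hE2 : a*c' - a'*c = 0 := (mul_eq_zero.mp f23).resolve_left (sub_ne_zero.mpr h23)
  have hE1 : a*d' + b*c' - a'*d - b'*c = 0 := by linear_combination g12 - (v₁+v₂)*hE2
  have hE0 : b*d' - b'*d = 0 := by linear_combination hc1 - v₁^2*hE2 - v₁*hE1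
  have hmu2 : (d*a' - b*c')^2 = (a*d - b*c) * (a'*d' - b'*c') := by
    linear_combination (-(b*d' - b'*d))*hE2 - (d*a' - b*c')*hE1
  have hmu : d*a' - b*c' ≠ 0 := by
    intro h
    rw [h] at hmu2
    exact (mul_ne_zero hdet hdet') (by linear_combination -hmu2)
  refine ⟨(d*a' - b*c')/(a*d - b*c), div_ne_zero hmu hdet, ?_, ?_, ?_, ?_⟩ <;>
    rw [div_mul_eq_mul_div, eq_div_iff hdet]
  · linear_combination b*hE2
  · linear_combination b*hE1 - a*hE0
  · linear_combination d*hE2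
  · linear_combination d*hE1 - c*hE0

/-- A fractional linear transformation mapping a norm-one point to a norm-one point
satisfies the cross-multiplied "conjugate symmetry" identity at that point. -/
private lemma crossU {F : Type*} [Field F] (q : ℕ)
    (frob : ∀ x y : F, (x + y)^q = x^q + y^q)
    (a b c d v w : F) (hv : v ^ (q+1) = 1) (hw : w ^ (q+1) = 1)
    (hval : a*v + b = w * (c*v + d)) :
    (c*v + d)*(d^q*v + c^q) = (b^q*v + a^q)*(a*v + b) := by
  have hv0 : v ≠ 0 := by
    rintro rfl
    rw [zero_pow (Nat.succ_ne_zero q)] at hv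
    exact zero_ne_one hv
  have hvv : v^q * v = 1 := by rw [← pow_succ]; exact hv
  have hww : w^q * w = 1 := by rw [← pow_succ]; exact hw
  have hNq : (a*v + b)^q = a^q*v^q + b^q := by rw [frob, mul_pow]
  have hDq : (c*v + d)^q = c^q*v^q + d^q := by rw [frob, mul_pow]
  have hkey : (a*v+b)^q*(a*v+b) = (c*v+d)^q*(c*v+d) := by
    rw [hval, mul_pow]
    linear_combination ((c*v+d)^q*(c*v+d))*hww
  refine mul_left_cancel₀ (pow_ne_zero q hv0) ?_
  linear_combination (a*v+b)*hNq - (c*v+d)*hDq - hkey + ((c*v+d)*d^q - (a*v+b)*b^q)*hvv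

/-- The setwise stabilizer of `U_{q+1}` in `PGL_2(GF(q^2))` acts sharply 3-transitively on
`U_{q+1}`, where `q = 2^m`, `m ≥ 2`: for any two triples of distinct elements of `U_{q+1}`
there is a linear fractional transformation stabilizing `U_{q+1}` carrying one to the other,
and it is unique up to a scalar multiple of the defining matrix. -/
theorem stmt6 (m q : ℕ) (hm : 2 ≤ m) (hq : q = 2 ^ m) (F : Type*) [Field F] [Fintype F]
    (hF : Fintype.card F = q ^ 2) (v₁ v₂ v₃ w₁ w₂ w₃ : F)
    (hv1 : v₁ ^ (q + 1) = 1) (hv2 : v₂ ^ (q + 1) = 1) (hv3 : v₃ ^ (q + 1) = 1)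
    (hw1 : w₁ ^ (q + 1) = 1) (hw2 : w₂ ^ (q + 1) = 1) (hw3 : w₃ ^ (q + 1) = 1)
    (hv12 : v₁ ≠ v₂) (hv13 : v₁ ≠ v₃) (hv23 : v₂ ≠ v₃)
    (hw12 : w₁ ≠ w₂) (hw13 : w₁ ≠ w₃) (hw23 : w₂ ≠ w₃) :
    ∃ a b c d : F,
      (a * d + b * c ≠ 0 ∧
        (∀ u : F, u ^ (q + 1) = 1 → ((a * u + b) / (c * u + d)) ^ (q + 1) = 1) ∧
        (a * v₁ + b) / (c * v₁ + d) = w₁ ∧ (a * v₂ + b) / (c * v₂ + d) = w₂ ∧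
        (a * v₃ + b) / (c * v₃ + d) = w₃) ∧
      ∀ a' b' c' d' : F,
        (a' * d' + b' * c' ≠ 0 ∧
          (∀ u : F, u ^ (q + 1) = 1 → ((a' * u + b') / (c' * u + d')) ^ (q + 1) = 1) ∧
          (a' * v₁ + b') / (c' * v₁ + d') = w₁ ∧ (a' * v₂ + b') / (c' * v₂ + d') = w₂ ∧
          (a' * v₃ + b') / (c' * v₃ + d') = w₃) →
        ∃ lam : F, lam ≠ 0 ∧ a' = lam * a ∧ b' = lam * b ∧ c' = lam * c ∧ d' = lam * d := by
  have hq0 : q ≠ 0 := by rw [hq]; positivity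
  haveI : Fact (Nat.Prime 2) := ⟨Nat.prime_two⟩
  -- characteristic 2
  have hchar2 : ringChar F = 2 := by
    obtain ⟨n, hp, hcard⟩ := FiniteField.card F (ringChar F)
    have h1 : ringChar F ^ (n : ℕ) = 2 ^ (m*2) := by rw [← hcard, hF, hq, ← pow_mul]
    have hdvd : ringChar F ∣ 2 ^ (m*2) := h1 ▸ dvd_pow_self (ringChar F) n.pos.ne'
    exact (Nat.prime_dvd_prime_iff_eq hp Nat.prime_two).mp (hp.dvd_of_dvd_pow hdvd)
  haveI hC2 : CharP F 2 := hchar2 ▸ ringChar.charP F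
  have frob : ∀ x y : F, (x + y)^q = x^q + y^q := by
    intro x y
    rw [hq]
    exact add_pow_char_pow ..
  have hne0 : ∀ x : F, x^(q+1) = 1 → x ≠ 0 := by
    rintro x hx rfl
    rw [zero_pow (Nat.succ_ne_zero q)] at hx
    exact zero_ne_one hx
  -- the explicit transformation
  obtain ⟨a, ha⟩ : ∃ x : F, x = -((w₃-w₁)*w₂*(v₃-v₂)) + (w₃-w₂)*w₁*(v₃-v₁) := ⟨_, rfl⟩
  obtain ⟨b, hb⟩ : ∃ x : F, x = (w₃-w₁)*w₂*(v₃-v₂)*v₁ - (w₃-w₂)*w₁*(v₃-v₁)*v₂ := ⟨_, rfl⟩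
  obtain ⟨c, hc⟩ : ∃ x : F, x = -((w₃-w₁)*(v₃-v₂)) + (w₃-w₂)*(v₃-v₁) := ⟨_, rfl⟩
  obtain ⟨d, hd⟩ : ∃ x : F, x = (w₃-w₁)*(v₃-v₂)*v₁ - (w₃-w₂)*(v₃-v₁)*v₂ := ⟨_, rfl⟩
  have hdet : a*d - b*c ≠ 0 := by
    have hE : a*d - b*c = (v₃-v₂)*((v₃-v₁)*((v₁-v₂)*((w₃-w₂)*((w₃-w₁)*(w₁-w₂))))) := by
      rw [ha, hb, hc, hd]; ring
    rw [hE]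
    exact mul_ne_zero (sub_ne_zero.mpr hv23.symm) (mul_ne_zero (sub_ne_zero.mpr hv13.symm)
      (mul_ne_zero (sub_ne_zero.mpr hv12) (mul_ne_zero (sub_ne_zero.mpr hw23.symm)
      (mul_ne_zero (sub_ne_zero.mpr hw13.symm) (sub_ne_zero.mpr hw12)))))
  have hd1 : c*v₁ + d ≠ 0 := by
    have hE : c*v₁ + d = (w₃-w₂)*((v₃-v₁)*(v₁-v₂)) := by rw [hc, hd]; ring
    rw [hE]
    exact mul_ne_zero (sub_ne_zero.mpr hw23.symm)
      (mul_ne_zero (sub_ne_zero.mpr hv13.symm) (sub_ne_zero.mpr hv12))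
  have hd2 : c*v₂ + d ≠ 0 := by
    have hE : c*v₂ + d = (w₃-w₁)*((v₃-v₂)*(v₁-v₂)) := by rw [hc, hd]; ring
    rw [hE]
    exact mul_ne_zero (sub_ne_zero.mpr hw13.symm)
      (mul_ne_zero (sub_ne_zero.mpr hv23.symm) (sub_ne_zero.mpr hv12))
  have hd3 : c*v₃ + d ≠ 0 := by
    have hE : c*v₃ + d = (v₃-v₂)*((v₃-v₁)*(w₁-w₂)) := by rw [hc, hd]; ring
    rw [hE]
    exact mul_ne_zero (sub_ne_zero.mpr hv23.symm)
      (mul_ne_zero (sub_ne_zero.mpr hv13.symm) (sub_ne_zero.mpr hw12))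
  have hval1 : a*v₁ + b = w₁*(c*v₁ + d) := by rw [ha, hb, hc, hd]; ring
  have hval2 : a*v₂ + b = w₂*(c*v₂ + d) := by rw [ha, hb, hc, hd]; ring
  have hval3 : a*v₃ + b = w₃*(c*v₃ + d) := by rw [ha, hb, hc, hd]; ring
  refine ⟨a, b, c, d, ⟨?_, ?_, ?_, ?_, ?_⟩, ?_⟩
  · rw [← CharTwo.sub_eq_add]; exact hdet
  · -- stabilizes U
    have hdetQ : c*b - d*a ≠ 0 := fun h => hdet (by linear_combination -h)
    have hdetP : b^q*c^q - a^q*d^q ≠ 0 := by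
      have hx : (b*c - a*d)^q = b^q*c^q - a^q*d^q := by
        rw [CharTwo.sub_eq_add, CharTwo.sub_eq_add, frob, mul_pow, mul_pow]
      rw [← hx]
      exact pow_ne_zero _ (fun h => hdet (by linear_combination -h))
    obtain ⟨lam, hlam0, hA, hB, hC, hD⟩ :=
      rigidity3 v₁ v₂ v₃ c d a b (b^q) (a^q) (d^q) (c^q) hv12 hv13 hv23 hdetQ hdetP
        (crossU q frob a b c d v₁ w₁ hv1 hw1 hval1)
        (crossU q frob a b c d v₂ w₂ hv2 hw2 hval2)
        (crossU q frob a b c d v₃ w₃ hv3 hw3 hval3)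
    intro u hu
    have hu0 : u ≠ 0 := hne0 u hu
    have huu : u^q * u = 1 := by rw [← pow_succ]; exact hu
    have hNqu : (a*u + b)^q = lam*d*u^q + lam*c := by
      rw [frob, mul_pow, hB, hA]
    have hDqu : (c*u + d)^q = lam*b*u^q + lam*a := by
      rw [frob, mul_pow, hD, hC]
    have hden : c*u + d ≠ 0 := by
      intro h0
      have h1 : lam*b*u^q + lam*a = 0 := by rw [← hDqu, h0, zero_pow hq0]
      have h2 : b*u^q + a = 0 := by
        have h3 : lam * (b*u^q + a) = 0 := by linear_combination h1
        exact (mul_eq_zero.mp h3).resolve_left hlam0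
      have hab : a*u + b = 0 := by linear_combination u*h2 - b*huu
      exact hdet (by linear_combination a*h0 - c*hab)
    have hnum : a*u + b ≠ 0 := by
      intro h0
      have h1 : lam*d*u^q + lam*c = 0 := by rw [← hNqu, h0, zero_pow hq0]
      have h2 : d*u^q + c = 0 := by
        have h3 : lam * (d*u^q + c) = 0 := by linear_combination h1
        exact (mul_eq_zero.mp h3).resolve_left hlam0
      exact hden (by linear_combination u*h2 - d*huu)
    have hkey : (a*u + b)^(q+1) = (c*u + d)^(q+1) := by
      rw [pow_succ, pow_succ, hNqu, hDqu]
      linear_combination lam*(a*d - b*c)*huu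
    rw [div_pow, hkey, div_self (pow_ne_zero _ hden)]
  · rw [div_eq_iff hd1]; exact hval1
  · rw [div_eq_iff hd2]; exact hval2
  · rw [div_eq_iff hd3]; exact hval3
  · -- uniqueness
    rintro a' b' c' d' ⟨hdp', hstab', h1', h2', h3'⟩
    have hdet' : a'*d' - b'*c' ≠ 0 := by rw [CharTwo.sub_eq_add]; exact hdp'
    have hden' : ∀ v : F, v^(q+1) = 1 → c'*v + d' ≠ 0 := by
      intro v hv h0
      have h := hstab' v hv
      rw [h0, div_zero, zero_pow (Nat.succ_ne_zero q)] at h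
      exact zero_ne_one h
    have hval1' : a'*v₁ + b' = w₁*(c'*v₁ + d') := (div_eq_iff (hden' v₁ hv1)).mp h1'
    have hval2' : a'*v₂ + b' = w₂*(c'*v₂ + d') := (div_eq_iff (hden' v₂ hv2)).mp h2'
    have hval3' : a'*v₃ + b' = w₃*(c'*v₃ + d') := (div_eq_iff (hden' v₃ hv3)).mp h3'
    exact rigidity3 v₁ v₂ v₃ a b c d a' b' c' d' hv12 hv13 hv23 hdet hdet'
      (by rw [hval1, hval1']; ring) (by rw [hval2, hval2']; ring)
      (by rw [hval3, hval3']; ring)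
end

section
/- Let q = 2^m with m ≥ 2. If C is a linear code over GF(2^h) of length 2^m + 1 that is invariant under the permutation action of PGL_2(GF(2^m)) on its coordinates, then C is one of: the zero code, the full space GF(2^h)^{q+1}, the repetition code {(c, c, ..., c) : c ∈ GF(2^h)}, or the even-sum code {(c_0, ..., c_q) : c_0 + ... + c_q = 0}. -/
/-- The action of an invertible matrix on the projective line `PG(1,K)`, realized as
the projectivization of `K^2`. -/
noncomputable def pglAct {K : Type*} [Field K] (M : GL (Fin 2) K) :
    Projectivization K (Fin 2 → K) → Projectivization K (Fin 2 → K) :=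
  Projectivization.map ((Matrix.GeneralLinearGroup.toLin M).toLinearEquiv.toLinearMap)
    (Matrix.GeneralLinearGroup.toLin M).toLinearEquiv.injective

namespace Stmt7Aux

variable {K : Type*} [Field K]

theorem pglAct_mk (M : GL (Fin 2) K) (v : Fin 2 → K) (hv : v ≠ 0) :
    pglAct M (Projectivization.mk K v hv) =
      Projectivization.mk K ((M : Matrix (Fin 2) (Fin 2) K).mulVec v)
      (by
        have h : (M : Matrix (Fin 2) (Fin 2) K).mulVec v =
            ((Matrix.GeneralLinearGroup.toLin M).toLinearEquiv.toLinearMap) v := rfl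
        rw [h]
        simpa using (Matrix.GeneralLinearGroup.toLin M).toLinearEquiv.injective.ne hv) := by
  rw [pglAct, Projectivization.map_mk]; rfl

theorem pglAct_injective (M : GL (Fin 2) K) : Function.Injective (pglAct M) :=
  Projectivization.map_injective _ _

theorem inf_nonzero : (![1, 0] : Fin 2 → K) ≠ 0 := fun h => by simpa using congrFun h 0

theorem aff_nonzero (x : K) : (![x, 1] : Fin 2 → K) ≠ 0 := fun h => by simpa using congrFun h 1

/-- The point at infinity. -/
noncomputable def inf (K : Type*) [Field K] : Projectivization K (Fin 2 → K) :=
  Projectivization.mk K ![1, 0] inf_nonzero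

/-- An affine point. -/
noncomputable def aff (x : K) : Projectivization K (Fin 2 → K) :=
  Projectivization.mk K ![x, 1] (aff_nonzero x)

theorem aff_ne_inf (x : K) : aff x ≠ inf K := by
  intro h
  rw [aff, inf, Projectivization.mk_eq_mk_iff'] at h
  obtain ⟨a, ha⟩ := h
  simpa using congrFun ha 1

theorem aff_injective : Function.Injective (aff (K := K)) := by
  intro x y hxy
  rw [aff, aff, Projectivization.mk_eq_mk_iff'] at hxy
  obtain ⟨a, ha⟩ := hxy
  have h1 : a * 1 = 1 := by simpa using congrFun ha 1
  have h0 : a * y = x := by simpa using congrFun ha 0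
  rw [mul_one] at h1
  rw [h1, one_mul] at h0
  exact h0.symm

theorem point_cases (p : Projectivization K (Fin 2 → K)) : p = inf K ∨ ∃ x, p = aff x := by
  induction p using Projectivization.ind with
  | h v hv =>
    by_cases h1 : v 1 = 0
    · left
      have h0 : v 0 ≠ 0 := by
        intro h0
        apply hv
        funext i; fin_cases i <;> assumption
      rw [inf, Projectivization.mk_eq_mk_iff']
      exact ⟨v 0, by funext i; fin_cases i <;> simp [h1]⟩
    · right
      refine ⟨v 0 / v 1, ?_⟩
      rw [aff, Projectivization.mk_eq_mk_iff']
      exact ⟨v 1, by funext i; fin_cases i <;> simp [h1] <;> field_simp⟩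

end Stmt7Aux

namespace Stmt7Aux

variable {K : Type*} [Field K]

/-- Translation by `b`. -/
def tMat (b : K) : GL (Fin 2) K :=
  Matrix.GeneralLinearGroup.mkOfDetNeZero !![1, b; 0, 1] (by simp)

theorem tMat_coe (b : K) : (tMat b : Matrix (Fin 2) (Fin 2) K) = !![1, b; 0, 1] := rfl

theorem tMat_inf (b : K) : pglAct (tMat b) (inf K) = inf K := by
  rw [inf, pglAct_mk, Projectivization.mk_eq_mk_iff']
  refine ⟨1, ?_⟩
  funext i
  fin_cases i <;> simp [tMat_coe, Matrix.mulVec, dotProduct, Fin.sum_univ_two]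

theorem tMat_aff (b x : K) : pglAct (tMat b) (aff x) = aff (x + b) := by
  rw [aff, aff, pglAct_mk, Projectivization.mk_eq_mk_iff']
  refine ⟨1, ?_⟩
  funext i
  fin_cases i <;> simp [tMat_coe, Matrix.mulVec, dotProduct, Fin.sum_univ_two]

theorem exists_map_inf (p : Projectivization K (Fin 2 → K)) :
    ∃ M : GL (Fin 2) K, pglAct M (inf K) = p := by
  rcases point_cases p with h | ⟨x, h⟩
  · exact ⟨tMat 0, by rw [tMat_inf, h]⟩
  · refine ⟨Matrix.GeneralLinearGroup.mkOfDetNeZero !![x, 1; 1, 0] (by simp), ?_⟩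
    have hco : ((Matrix.GeneralLinearGroup.mkOfDetNeZero !![x, 1; 1, 0] (by simp) :
        GL (Fin 2) K) : Matrix (Fin 2) (Fin 2) K) = !![x, 1; 1, 0] := rfl
    rw [h, inf, aff, pglAct_mk, Projectivization.mk_eq_mk_iff']
    refine ⟨1, ?_⟩
    funext i
    fin_cases i <;>
      simp [hco, Matrix.mulVec, dotProduct, Fin.sum_univ_two]

theorem exists_map_to_inf (p : Projectivization K (Fin 2 → K)) :
    ∃ M : GL (Fin 2) K, pglAct M p = inf K := by
  rcases point_cases p with h | ⟨x, h⟩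
  · exact ⟨tMat 0, by rw [h, tMat_inf]⟩
  · refine ⟨Matrix.GeneralLinearGroup.mkOfDetNeZero !![0, 1; 1, -x] (by simp), ?_⟩
    have hco : ((Matrix.GeneralLinearGroup.mkOfDetNeZero !![0, 1; 1, -x] (by simp) :
        GL (Fin 2) K) : Matrix (Fin 2) (Fin 2) K) = !![0, 1; 1, -x] := rfl
    rw [h, inf, aff, pglAct_mk, Projectivization.mk_eq_mk_iff']
    refine ⟨1, ?_⟩
    funext i
    fin_cases i <;>
      simp [hco, Matrix.mulVec, dotProduct, Fin.sum_univ_two]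

end Stmt7Aux


open Stmt7Aux

/-- Let `q = 2^m` with `m ≥ 2`. If `C` is a linear code over `GF(2^h)` of length `2^m + 1`
(coordinates indexed by the projective line `PG(1, GF(2^m))`) that is invariant under the
permutation action of `PGL_2(GF(2^m))`, then `C` is the zero code, the full space, the
repetition code, or the even-sum code. -/
theorem stmt7 (m h q : ℕ) (hm : 2 ≤ m) (hq : q = 2 ^ m) (hh : 1 ≤ h)
    (K : Type*) [Field K] [Fintype K] (hK : Fintype.card K = q)
    (R : Type*) [Field R] [Fintype R] (hR : Fintype.card R = 2 ^ h)
    [Fintype (Projectivization K (Fin 2 → K))]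
    (C : Submodule R (Projectivization K (Fin 2 → K) → R))
    (hinv : ∀ M : GL (Fin 2) K, ∀ f ∈ C, (fun x => f (pglAct M x)) ∈ C) :
    C = ⊥ ∨ C = ⊤ ∨ C = Submodule.span R {fun _ => (1 : R)} ∨
      C = LinearMap.ker (∑ x : Projectivization K (Fin 2 → K),
        LinearMap.proj (R := R) (φ := fun _ : Projectivization K (Fin 2 → K) => R) x) := by
  classical
  -- characteristic 2 facts
  have hcard : ((Fintype.card R : ℕ) : R) = 0 := FiniteField.cast_card_eq_zero R
  rw [hR] at hcard
  have h2 : (2 : R) = 0 := by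
    have h2h : (2 : R) ^ h = 0 := by push_cast at hcard; exact_mod_cast hcard
    exact (pow_eq_zero_iff (by omega)).mp h2h
  have hneg : ∀ a : R, -a = a := fun a => by
    rw [neg_eq_iff_add_eq_zero, ← two_mul, h2, zero_mul]
  set L : (Projectivization K (Fin 2 → K) → R) →ₗ[R] R :=
    ∑ x : Projectivization K (Fin 2 → K),
      LinearMap.proj (R := R) (φ := fun _ : Projectivization K (Fin 2 → K) => R) x with hL
  have hLapp : ∀ g : Projectivization K (Fin 2 → K) → R,
      L g = ∑ x : Projectivization K (Fin 2 → K), g x := by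
    intro g; rw [hL]; simp [LinearMap.sum_apply]
  -- splitting sums over the projective line
  have hbij : Function.Bijective (fun o : Option K => o.elim (inf K) aff) := by
    constructor
    · intro o₁ o₂ hoo
      match o₁, o₂ with
      | none, none => rfl
      | none, some x => exact absurd hoo.symm (aff_ne_inf x)
      | some x, none => exact absurd hoo (aff_ne_inf x)
      | some x, some y => exact congrArg some (aff_injective hoo)
    · intro p
      rcases point_cases p with hcase | ⟨x, hcase⟩
      · exact ⟨none, hcase.symm⟩
      · exact ⟨some x, hcase.symm⟩
  have hsplit : ∀ g : Projectivization K (Fin 2 → K) → R,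
      ∑ p, g p = g (inf K) + ∑ x : K, g (aff x) := by
    intro g
    rw [← Function.Bijective.sum_comp hbij g]
    exact Fintype.sum_option _
  -- main lemma: if C contains a nonconstant function, then ker L ≤ C
  have hker_le : (∃ f ∈ C, ¬∃ c : R, ∀ p, f p = c) → LinearMap.ker L ≤ C := by
    rintro ⟨f, hfC, hfnc⟩
    set S := ∑ p, f p with hS
    have hp0 : ∃ p₀, f p₀ ≠ S := by
      by_contra hcon
      push_neg at hcon
      exact hfnc ⟨S, hcon⟩
    obtain ⟨p₀, hp₀⟩ := hp0
    obtain ⟨M, hM⟩ := exists_map_inf p₀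
    set f' : Projectivization K (Fin 2 → K) → R := fun y => f (pglAct M y) with hf'
    have hf'C : f' ∈ C := hinv M f hfC
    have hf'sum : ∑ p, f' p = S := by
      simp only [hf', hS]
      exact Function.Bijective.sum_comp
        ((Finite.injective_iff_bijective).mp (pglAct_injective M)) f
    have hf'inf : f' (inf K) = f p₀ := by rw [hf']; simp [hM]
    set c := ∑ x : K, f' (aff x) with hc
    have hcne : c ≠ 0 := by
      have hsp := hsplit f'
      rw [hf'sum, hf'inf, ← hc] at hsp
      intro h0
      rw [h0, add_zero] at hsp
      exact hp₀ hsp.symm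
    set g : Projectivization K (Fin 2 → K) → R :=
      ∑ b : K, (fun y => f' (pglAct (tMat b) y)) with hg
    have hgC : g ∈ C := Submodule.sum_mem C fun b _ => hinv (tMat b) f' hf'C
    have hgapp : ∀ y, g y = ∑ b : K, f' (pglAct (tMat b) y) := by
      intro y; rw [hg]; simp [Finset.sum_apply]
    have hginf : g (inf K) = 0 := by
      rw [hgapp]
      simp only [tMat_inf]
      rw [Finset.sum_const, Finset.card_univ, hK, nsmul_eq_mul]
      have hq0 : ((q : ℕ) : R) = 0 := by
        rw [hq]; push_cast; rw [h2]; exact zero_pow (by omega)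
      rw [hq0, zero_mul]
    have hgaff : ∀ x : K, g (aff x) = c := by
      intro x
      rw [hgapp, hc]
      simp only [tMat_aff]
      exact Fintype.sum_equiv (Equiv.addLeft x) _ _ fun b => by simp
    have hw1 : (fun y : Projectivization K (Fin 2 → K) =>
        if y = inf K then (0 : R) else 1) ∈ C := by
      have heq : (fun y : Projectivization K (Fin 2 → K) =>
          if y = inf K then (0 : R) else 1) = c⁻¹ • g := by
        funext y
        rcases point_cases y with hcase | ⟨x, hcase⟩
        · simp [hcase, hginf]
        · simp [hcase, aff_ne_inf, hgaff, inv_mul_cancel₀ hcne]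
      rw [heq]
      exact Submodule.smul_mem C _ hgC
    have hwp : ∀ p₁, (fun y : Projectivization K (Fin 2 → K) =>
        if y = p₁ then (0 : R) else 1) ∈ C := by
      intro p₁
      obtain ⟨N, hN⟩ := exists_map_to_inf p₁
      have hmem := hinv N _ hw1
      have heq : (fun y : Projectivization K (Fin 2 → K) =>
          if pglAct N y = inf K then (0 : R) else 1)
          = fun y => if y = p₁ then (0 : R) else 1 := by
        funext y
        by_cases hy : y = p₁
        · simp [hy, hN]
        · have hne : pglAct N y ≠ inf K := fun hcon =>
            hy (pglAct_injective N (hcon.trans hN.symm))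
          simp [hy, hne]
      rw [heq] at hmem
      exact hmem
    intro g₀ hg₀
    rw [LinearMap.mem_ker, hLapp] at hg₀
    have hrep : g₀ = ∑ p, g₀ p • (fun y : Projectivization K (Fin 2 → K) =>
        if y = p then (0 : R) else 1) := by
      funext y
      rw [Finset.sum_apply]
      have hterm : ∀ p, (g₀ p • fun y : Projectivization K (Fin 2 → K) =>
          if y = p then (0 : R) else 1) y = g₀ p - (if y = p then g₀ p else 0) := by
        intro p; by_cases hyp : y = p <;> simp [hyp]
      rw [Finset.sum_congr rfl fun p _ => hterm p, Finset.sum_sub_distrib, hg₀,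
        Finset.sum_ite_eq]
      simp [hneg]
    rw [hrep]
    exact Submodule.sum_mem C fun p _ => Submodule.smul_mem C _ (hwp p)
  -- main case split
  by_cases hCnc : ∃ f ∈ C, ¬∃ c : R, ∀ p, f p = c
  · have hker := hker_le hCnc
    by_cases hCS : ∃ f ∈ C, L f ≠ 0
    · right; left
      obtain ⟨f₀, hf₀C, hf₀⟩ := hCS
      rw [eq_top_iff]
      intro g₀ _
      have hmem : g₀ - ((L g₀) * (L f₀)⁻¹) • f₀ ∈ LinearMap.ker L := by
        rw [LinearMap.mem_ker, map_sub, map_smul, smul_eq_mul, mul_assoc,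
          inv_mul_cancel₀ hf₀, mul_one, sub_self]
      have := Submodule.add_mem C (hker hmem)
        (Submodule.smul_mem C ((L g₀) * (L f₀)⁻¹) hf₀C)
      simpa using this
    · right; right; right
      push_neg at hCS
      exact le_antisymm (fun f hf => LinearMap.mem_ker.mpr (hCS f hf)) hker
  · push_neg at hCnc
    by_cases hbot : C = ⊥
    · left; exact hbot
    · right; right; left
      apply le_antisymm
      · intro f hf
        obtain ⟨cst, hcst⟩ := hCnc f hf
        rw [Submodule.mem_span_singleton]
        exact ⟨cst, by funext y; simp [hcst y]⟩
      · obtain ⟨f, hfC, hfne⟩ := Submodule.exists_mem_ne_zero_of_ne_bot hbot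
        obtain ⟨cst, hcst⟩ := hCnc f hfC
        have hcstne : cst ≠ 0 := by
          intro h0
          apply hfne
          funext y; rw [hcst y, h0]; rfl
        rw [Submodule.span_singleton_le_iff_mem]
        have : (fun _ : Projectivization K (Fin 2 → K) => (1 : R)) = cst⁻¹ • f := by
          funext y; simp [hcst y, inv_mul_cancel₀ hcstne]
        rw [this]
        exact Submodule.smul_mem C _ hfC
end

section
/- Let q = 2^m with m ≥ 2, let 1 ≤ k ≤ 2^m, and let B be a nonempty collection of k-subsets of PG(1, 2^m) invariant under the action of PGL_2(GF(2^m)). Then the 2-rank of the incidence matrix of the incidence structure (PG(1, 2^m), B) equals 2^m if k is even, and 2^m + 1 if k is odd. -/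
/-!
The rows of the incidence matrix span a subspace `C` of `ZMod 2`-valued functions on `ℙ¹(K)`
that is invariant under `GL₂(K)`. Pick a block containing `∞ = [1 : 0]` but not `0 = [0 : 1]`
(2-transitivity) and sum its translates under the torus `diag(a, 1)`, `a ∈ Kˣ`. The torus has odd
order `q - 1`, fixes `∞` and `0` and is transitive on the other points, so the sum is `1` at `∞`,
`0` at `0` and constant elsewhere: it is `e_∞` or `1 - e_0`. By transitivity `C` then contains
all `e_x`, or all `1 - e_x` and hence the whole even-weight code. Since every row has weight `k`,
`C` is the even-weight code (of dimension `q`) when `k` is even and everything when `k` is odd.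
-/
open Module MulAction Pointwise
open scoped LinearAlgebra.Projectivization

section CoordinateHyperplane

variable {F X : Type*} [Field F] [Fintype X]

variable (F X) in
def sumCoords : Dual F (X → F) := ∑ x, LinearMap.proj x

@[simp]
lemma sumCoords_apply (v : X → F) : sumCoords F X v = ∑ x, v x := by
  simp [sumCoords]

lemma finrank_ker_sumCoords_add_one [DecidableEq X] [Nonempty X] :
    finrank F (LinearMap.ker (sumCoords F X)) + 1 = Fintype.card X := by
  rw [Dual.finrank_ker_add_one_of_ne_zero, finrank_fintype_fun_eq_card]
  obtain ⟨x⟩ := ‹Nonempty X›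
  exact DFunLike.ne_iff.2 ⟨Pi.single x 1, by simp⟩

lemma isCoatom_ker_sumCoords [DecidableEq X] [Nonempty X] :
    IsCoatom (LinearMap.ker (sumCoords F X)) := by
  refine LinearMap.isCoatom_ker_of_surjective fun a => ?_
  obtain ⟨x⟩ := ‹Nonempty X›
  exact ⟨Pi.single x a, by simp⟩

end CoordinateHyperplane

section InvariantSubspace

variable {G X F : Type*} [Group G] [MulAction G X] [DecidableEq X] [Field F]

lemma single_comp_smul {g : G} {x y : X} (h : g • x = y) (a : F) :
    (fun z => (Pi.single y a : X → F) (g • z)) = Pi.single x a := by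
  funext z
  simp only [Pi.single_apply, ← h, smul_left_cancel_iff]

variable [Fintype X] [IsPretransitive G X] {C : Submodule F (X → F)}

lemma eq_top_of_single_mem (hC : ∀ g : G, ∀ v ∈ C, (fun x => v (g • x)) ∈ C) {x₀ : X}
    (h : Pi.single x₀ 1 ∈ C) : C = ⊤ := by
  refine eq_top_iff.2 ((Pi.basisFun F X).span_eq ▸ Submodule.span_le.2 ?_)
  rintro _ ⟨x, rfl⟩
  obtain ⟨g, hg⟩ := exists_smul_eq G x x₀
  simpa [single_comp_smul hg] using hC g _ h

lemma ker_sumCoords_le_of_one_sub_single_mem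
    (hC : ∀ g : G, ∀ v ∈ C, (fun x => v (g • x)) ∈ C) {x₀ : X}
    (h : 1 - Pi.single x₀ 1 ∈ C) : LinearMap.ker (sumCoords F X) ≤ C := by
  have hmem (x : X) : 1 - Pi.single x 1 ∈ C := by
    obtain ⟨g, hg⟩ := exists_smul_eq G x x₀
    rw [← single_comp_smul hg]
    exact hC g _ h
  intro v hv
  have hv' : -∑ x, v x • (1 - Pi.single x (1 : F)) = v := by
    ext y
    simpa [Finset.sum_apply, mul_sub, Pi.single_apply] using hv
  exact hv' ▸ C.neg_mem (C.sum_mem fun x _ => C.smul_mem _ (hmem x))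

end InvariantSubspace

section IncidenceCode

variable {G X : Type*} [Group G] [MulAction G X] [DecidableEq X]

def incidenceCode (B : Finset (Finset X)) : Submodule (ZMod 2) (X → ZMod 2) :=
  Submodule.span (ZMod 2) (Set.range fun (b : {b // b ∈ B}) (x : X) =>
    if x ∈ b.1 then (1 : ZMod 2) else 0)

lemma rank_eq_finrank_incidenceCode [Fintype X] (B : Finset (Finset X)) :
    (Matrix.of fun (b : {b // b ∈ B}) (x : X) => if x ∈ b.1 then (1 : ZMod 2) else 0).rank =
      finrank (ZMod 2) (incidenceCode B) :=
  Matrix.rank_eq_finrank_span_row _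

variable {B : Finset (Finset X)}

lemma indicator_mem_incidenceCode {b : Finset X} (hb : b ∈ B) :
    (fun x => if x ∈ b then (1 : ZMod 2) else 0) ∈ incidenceCode B :=
  Submodule.subset_span ⟨⟨b, hb⟩, rfl⟩

lemma comp_smul_mem_incidenceCode (hB : ∀ g : G, ∀ b ∈ B, g • b ∈ B) (g : G) {v : X → ZMod 2}
    (hv : v ∈ incidenceCode B) : (fun x => v (g • x)) ∈ incidenceCode B := by
  suffices incidenceCode B ≤ (incidenceCode B).comap (LinearMap.funLeft _ _ (g • ·)) from this hv
  refine Submodule.span_le.2 ?_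
  rintro _ ⟨⟨b, hb⟩, rfl⟩
  show (fun x => if g • x ∈ b then (1 : ZMod 2) else 0) ∈ incidenceCode B
  simpa [← Finset.mem_inv_smul_finset_iff] using indicator_mem_incidenceCode (hB g⁻¹ b hb)

lemma incidenceCode_le_ker_sumCoords [Fintype X] (hB : ∀ b ∈ B, Even b.card) :
    incidenceCode B ≤ LinearMap.ker (sumCoords (ZMod 2) X) := by
  refine Submodule.span_le.2 ?_
  rintro _ ⟨⟨b, hb⟩, rfl⟩
  simpa [Finset.sum_boole, ZMod.natCast_eq_zero_iff_even] using hB b hb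

theorem finrank_incidenceCode [Fintype X] [IsPretransitive G X]
    (hB : ∀ g : G, ∀ b ∈ B, g • b ∈ B) {k : ℕ} (hk : ∀ b ∈ B, b.card = k) (hBne : B.Nonempty)
    {x₀ x₁ : X}
    (h : Pi.single x₀ 1 ∈ incidenceCode B ∨ 1 - Pi.single x₁ 1 ∈ incidenceCode B) :
    finrank (ZMod 2) (incidenceCode B) =
      if Even k then Fintype.card X - 1 else Fintype.card X := by
  have : Nonempty X := ⟨x₀⟩
  have hker : LinearMap.ker (sumCoords (ZMod 2) X) ≤ incidenceCode B := by
    rcases h with h | h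
    · exact eq_top_of_single_mem (comp_smul_mem_incidenceCode hB) h ▸ le_top
    · exact ker_sumCoords_le_of_one_sub_single_mem (comp_smul_mem_incidenceCode hB) h
  split_ifs with hke
  · have := finrank_ker_sumCoords_add_one (F := ZMod 2) (X := X)
    rw [le_antisymm (incidenceCode_le_ker_sumCoords fun b hb => hk b hb ▸ hke) hker]
    omega
  · obtain ⟨b, hb⟩ := hBne
    have hne : incidenceCode B ≠ LinearMap.ker (sumCoords (ZMod 2) X) := fun heq => by
      have := heq ▸ indicator_mem_incidenceCode hb
      simp [hk b hb, ZMod.natCast_eq_zero_iff_even, hke] at this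
    rw [(isCoatom_ker_sumCoords.le_iff.1 hker).resolve_right hne, finrank_top,
      finrank_fintype_fun_eq_card]

lemma exists_mem_notMem_of_isMultiplyPretransitive [IsMultiplyPretransitive G X 2]
    (hB : ∀ g : G, ∀ b ∈ B, g • b ∈ B) {b : Finset X} (hb : b ∈ B) {p p' : X} (hp : p ∈ b)
    (hp' : p' ∉ b) {x₀ x₁ : X} (hx : x₀ ≠ x₁) : ∃ c ∈ B, x₀ ∈ c ∧ x₁ ∉ c := by
  obtain ⟨g, hg, hg'⟩ := is_two_pretransitive_iff.1 ‹_› (ne_of_mem_of_not_mem hp hp') hx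
  exact ⟨g • b, hB g b hb, hg ▸ Finset.smul_mem_smul_finset hp,
    hg' ▸ (Finset.smul_mem_smul_finset_iff g).not.2 hp'⟩

end IncidenceCode

namespace Projectivization

variable {K : Type*} [Field K]

instance isMultiplyPretransitive_generalLinearGroup_two {ι : Type*} [Fintype ι]
    [DecidableEq ι] :
    IsMultiplyPretransitive (GL ι K) (ℙ K (ι → K)) 2 :=
  let f : ℙ K (ι → K) →ₑ[Matrix.SpecialLinearGroup.toGL] ℙ K (ι → K) :=
    { toFun := id, map_smul' _ _ := rfl }
  IsPretransitive.of_embedding (f := f) Function.surjective_id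

lemma card_fin_two [Fintype K] [Fintype (ℙ K (Fin 2 → K))] :
    Fintype.card (ℙ K (Fin 2 → K)) = Fintype.card K + 1 := by
  simp only [Fintype.card_eq_nat_card]
  exact card_of_finrank_two K (Fin 2 → K) (by simp)

variable (K) in
/-- `a ↦ diag(a, 1)` -/
noncomputable def torus : Kˣ →* GL (Fin 2) K :=
  (Units.map (Matrix.diagonalRingHom (Fin 2) K).toMonoidHom).comp
    (MulEquiv.piUnits.symm.toMonoidHom.comp (MonoidHom.mulSingle (fun _ : Fin 2 => Kˣ) 0))

lemma torus_smul (a : Kˣ) (v : Fin 2 → K) : torus K a • v = ![a * v 0, v 1] := by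
  ext i
  fin_cases i <;> simp [torus, Units.smul_def]

variable (K) in
def infinity : ℙ K (Fin 2 → K) := mk K ![1, 0] (by simp)

variable (K) in
def zero : ℙ K (Fin 2 → K) := mk K ![0, 1] (by simp)

lemma infinity_ne_zero : infinity K ≠ zero K := by
  simp [infinity, zero, mk_eq_mk_iff']

lemma torus_smul_infinity (a : Kˣ) : torus K a • infinity K = infinity K := by
  rw [infinity, smul_mk, mk_eq_mk_iff']
  exact ⟨a, by rw [torus_smul]; simp⟩

lemma torus_smul_zero (a : Kˣ) : torus K a • zero K = zero K := by
  rw [zero, smul_mk, mk_eq_mk_iff']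
  exact ⟨1, by rw [torus_smul]; simp⟩

lemma exists_torus_smul_eq {y : ℙ K (Fin 2 → K)} (hy : y ≠ infinity K) (hy' : y ≠ zero K) :
    ∃ a : Kˣ, torus K a • mk K ![1, 1] (by simp) = y := by
  induction y using ind with | _ v hv =>
  have hv1 : v 1 ≠ 0 := fun h =>
    hy <| (mk_eq_mk_iff' ..).2 ⟨v 0, by ext i; fin_cases i <;> simp [h]⟩
  have hv0 : v 0 ≠ 0 := fun h =>
    hy' <| (mk_eq_mk_iff' ..).2 ⟨v 1, by ext i; fin_cases i <;> simp [h]⟩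
  refine ⟨Units.mk0 (v 0 / v 1) (div_ne_zero hv0 hv1), ?_⟩
  rw [smul_mk, mk_eq_mk_iff', torus_smul]
  exact ⟨(v 1)⁻¹, by ext i; fin_cases i <;> simp [hv1, div_eq_inv_mul]⟩

variable [Fintype K] [DecidableEq K] [DecidableEq (ℙ K (Fin 2 → K))]

lemma single_infinity_mem_or_one_sub_single_zero_mem (hK : Odd (Fintype.card Kˣ))
    {C : Submodule (ZMod 2) (ℙ K (Fin 2 → K) → ZMod 2)}
    (hC : ∀ g : GL (Fin 2) K, ∀ v ∈ C, (fun x => v (g • x)) ∈ C) {w : ℙ K (Fin 2 → K) → ZMod 2}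
    (hw : w ∈ C) (hw₁ : w (infinity K) = 1) (hw₀ : w (zero K) = 0) :
    Pi.single (infinity K) 1 ∈ C ∨ 1 - Pi.single (zero K) 1 ∈ C := by
  set u : ℙ K (Fin 2 → K) → ZMod 2 := ∑ a : Kˣ, fun x => w (torus K a • x)
  have hu : u ∈ C := C.sum_mem fun a _ => hC _ _ hw
  have hfix {y} (hy : ∀ a, torus K a • y = y) : u y = w y := by
    simp [u, Finset.sum_apply, hy, ZMod.natCast_eq_one_iff_odd.2 hK]
  have hgen {y} (hy : y ≠ infinity K) (hy' : y ≠ zero K) : u y = u (mk K ![1, 1] (by simp)) := by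
    obtain ⟨s, rfl⟩ := exists_torus_smul_eq hy hy'
    simp only [u, Finset.sum_apply, smul_smul, ← map_mul]
    exact Fintype.sum_equiv (Equiv.mulRight s) _ _ fun _ => rfl
  have key : u = Pi.single (infinity K) 1 ∨ u = 1 - Pi.single (zero K) 1 := by
    rcases (by decide : ∀ z : ZMod 2, z = 0 ∨ z = 1) (u (mk K ![1, 1] (by simp))) with h | h <;>
      [left; right] <;>
    · funext y
      rcases eq_or_ne y (infinity K) with rfl | h₁
      · simp [hfix torus_smul_infinity, hw₁, infinity_ne_zero]
      rcases eq_or_ne y (zero K) with rfl | h₀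
      · simp [hfix torus_smul_zero, hw₀, infinity_ne_zero.symm]
      simp [hgen h₁ h₀, h, h₁, h₀]
  rcases key with h | h <;> [left; right] <;> exact h ▸ hu

end Projectivization

open Projectivization in
theorem stmt8_general (m q k : ℕ) (hq : q = 2 ^ m) (hk1 : 1 ≤ k) (hkq : k ≤ q)
    (K : Type*) [Field K] [Fintype K] (hK : Fintype.card K = q)
    [Fintype (Projectivization K (Fin 2 → K))] [DecidableEq (Projectivization K (Fin 2 → K))]
    (B : Finset (Finset (Projectivization K (Fin 2 → K)))) (hBne : B.Nonempty)
    (hcard : ∀ b ∈ B, b.card = k)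
    (hinv : ∀ M : GL (Fin 2) K, ∀ b ∈ B, b.image (pglAct M) ∈ B) :
    (Matrix.of fun (b : {b // b ∈ B}) (x : Projectivization K (Fin 2 → K)) =>
        if x ∈ b.1 then (1 : ZMod 2) else 0).rank = if Even k then q else q + 1 := by
  classical
  have hP : Fintype.card (ℙ K (Fin 2 → K)) = q + 1 := hK ▸ card_fin_two
  have hunits : Odd (Fintype.card Kˣ) := by
    have hm : m ≠ 0 := by
      rintro rfl
      have := Fintype.one_lt_card (α := K)
      omega
    rw [Fintype.card_units, hK, hq]
    exact Nat.Even.sub_odd Nat.one_le_two_pow (Nat.even_pow.2 ⟨even_two, hm⟩) odd_one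
  obtain ⟨b, hb⟩ := hBne
  obtain ⟨p, hp⟩ : b.Nonempty := Finset.card_pos.1 (hcard b hb ▸ hk1)
  obtain ⟨p', -, hp'⟩ := Finset.exists_mem_notMem_of_card_lt_card (s := b) (t := Finset.univ)
    (by rw [Finset.card_univ, hP, hcard b hb]; omega)
  obtain ⟨c, hc, hc₁, hc₀⟩ :=
    exists_mem_notMem_of_isMultiplyPretransitive hinv hb hp hp' infinity_ne_zero
  have := isPretransitive_of_is_two_pretransitive (G := GL (Fin 2) K) (α := ℙ K (Fin 2 → K))
  have hkey := single_infinity_mem_or_one_sub_single_zero_mem hunits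
    (comp_smul_mem_incidenceCode hinv) (indicator_mem_incidenceCode hc) (by simp [hc₁])
    (by simp [hc₀])
  rw [rank_eq_finrank_incidenceCode, finrank_incidenceCode hinv hcard ⟨b, hb⟩ hkey, hP]
  simp

/-- Let `q = 2^m` with `m ≥ 2`, `1 ≤ k ≤ 2^m`, and let `B` be a nonempty collection of
`k`-subsets of `PG(1, GF(2^m))` invariant under `PGL_2(GF(2^m))`. Then the 2-rank of the
incidence matrix of `(PG(1, GF(2^m)), B)` equals `2^m` if `k` is even and `2^m + 1` if `k`
is odd. -/
theorem stmt8 (m q k : ℕ) (hm : 2 ≤ m) (hq : q = 2 ^ m) (hk1 : 1 ≤ k) (hkq : k ≤ q)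
    (K : Type*) [Field K] [Fintype K] (hK : Fintype.card K = q)
    [Fintype (Projectivization K (Fin 2 → K))] [DecidableEq (Projectivization K (Fin 2 → K))]
    (B : Finset (Finset (Projectivization K (Fin 2 → K)))) (hBne : B.Nonempty)
    (hcard : ∀ b ∈ B, b.card = k)
    (hinv : ∀ M : GL (Fin 2) K, ∀ b ∈ B, b.image (pglAct M) ∈ B) :
    (Matrix.of fun (b : {b // b ∈ B}) (x : Projectivization K (Fin 2 → K)) =>
        if x ∈ b.1 then (1 : ZMod 2) else 0).rank = if Even k then q else q + 1 :=
  stmt8_general m q k hq hk1 hkq K hK B hBne hcard hinv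
end

section
/- Let q = 2^m with m even, and let u_1, u_2, u_3 be three distinct (q+1)-th roots of unity in GF(q^2). Then σ_1^2 + σ_2 ≠ 0 and σ_2^2 + σ_1 σ_3 ≠ 0, where σ_1 = u_1+u_2+u_3, σ_2 = u_1u_2+u_1u_3+u_2u_3, σ_3 = u_1u_2u_3. -/
/-- Key lemma: for three distinct `(q+1)`-th roots of unity in `GF(q^2)` (with `q = 2^m`,
`m` even), we have `σ₁² + σ₂ ≠ 0`. -/
lemma key9 (m q : ℕ) (hm : Even m) (hq : q = 2 ^ m) (F : Type*) [Field F] [Fintype F]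
    (hF : Fintype.card F = q ^ 2) (u₁ u₂ u₃ : F)
    (h1 : u₁ ^ (q + 1) = 1) (h2 : u₂ ^ (q + 1) = 1) (h3 : u₃ ^ (q + 1) = 1)
    (h12 : u₁ ≠ u₂) (h13 : u₁ ≠ u₃) (h23 : u₂ ≠ u₃) :
    (u₁ + u₂ + u₃) ^ 2 + (u₁ * u₂ + u₁ * u₃ + u₂ * u₃) ≠ 0 := by
  -- m ≠ 0
  rcases Nat.eq_zero_or_pos m with hm0 | hmpos
  · exfalso
    have : (1 : ℕ) < Fintype.card F := Fintype.one_lt_card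
    rw [hF, hq, hm0] at this
    norm_num at this
  -- characteristic 2
  haveI hfact2 : Fact (Nat.Prime 2) := ⟨Nat.prime_two⟩
  haveI : CharP F (ringChar F) := ringChar.charP F
  have hchar2 : ringChar F = 2 := by
    obtain ⟨n, hp, hcard⟩ := FiniteField.card F (ringChar F)
    have hdvd : ringChar F ∣ 2 ^ (m * 2) := by
      have : (ringChar F) ^ (n : ℕ) = 2 ^ (m * 2) := by
        rw [← hcard, hF, hq, ← pow_mul]
      exact this ▸ dvd_pow_self (ringChar F) n.ne_zero
    exact (Nat.prime_dvd_prime_iff_eq hp Nat.prime_two).mp (hp.dvd_of_dvd_pow hdvd)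
  haveI hC2 : CharP F 2 := hchar2 ▸ ringChar.charP F
  have h2F : (2 : F) = 0 := CharP.cast_eq_zero F 2
  have hqne : q ≠ 0 := by rw [hq]; positivity
  -- Frobenius additivity
  have hfrob : ∀ x y : F, (x + y) ^ q = x ^ q + y ^ q := by
    intro x y
    rw [hq]
    exact add_pow_char_pow x y 2 m
  -- abbreviations
  set s : F := u₁ + u₂ + u₃ with hs
  intro hcon
  have hσ2 : u₁ * u₂ + u₁ * u₃ + u₂ * u₃ = s ^ 2 := by
    linear_combination hcon - s ^ 2 * h2F
  -- q-power relations
  have hq1 : u₁ ^ q * u₁ = 1 := by rw [← pow_succ]; exact h1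
  have hq2 : u₂ ^ q * u₂ = 1 := by rw [← pow_succ]; exact h2
  have hq3 : u₃ ^ q * u₃ = 1 := by rw [← pow_succ]; exact h3
  have hA : s ^ q * (u₁ * u₂ * u₃) = u₁ * u₂ + u₁ * u₃ + u₂ * u₃ := by
    rw [hs, hfrob, hfrob]
    linear_combination (u₂ * u₃) * hq1 + (u₁ * u₃) * hq2 + (u₁ * u₂) * hq3
  have hB : (u₁ * u₂ + u₁ * u₃ + u₂ * u₃) ^ q * (u₁ * u₂ * u₃) = s := by
    rw [hfrob, hfrob, mul_pow, mul_pow, mul_pow]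
    linear_combination (u₃ * (u₂ ^ q) * u₂ + u₂ * (u₃ ^ q) * u₃) * hq1
      + (u₃ + u₁ * (u₃ ^ q) * u₃) * hq2 + (u₂ + u₁) * hq3
  -- derive σ₂² = σ₁ σ₃
  have h2σ : (u₁ * u₂ + u₁ * u₃ + u₂ * u₃) ^ 2 = s * (u₁ * u₂ * u₃) := by
    have e1 : ((u₁ * u₂ + u₁ * u₃ + u₂ * u₃) ^ q) = (s ^ q) ^ 2 := by
      rw [hσ2, pow_right_comm]
    calc (u₁ * u₂ + u₁ * u₃ + u₂ * u₃) ^ 2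
        = (s ^ q * (u₁ * u₂ * u₃)) ^ 2 := by rw [hA]
      _ = ((s ^ q) ^ 2 * (u₁ * u₂ * u₃)) * (u₁ * u₂ * u₃) := by ring
      _ = ((u₁ * u₂ + u₁ * u₃ + u₂ * u₃) ^ q * (u₁ * u₂ * u₃)) * (u₁ * u₂ * u₃) := by
          rw [e1]
      _ = s * (u₁ * u₂ * u₃) := by rw [hB]
  rcases eq_or_ne s 0 with hs0 | hsne
  · -- s = 0 : then σ₂ = 0 and u₁³ = u₂³, contradiction via gcd(3, q+1) = 1
    have hσ20 : u₁ * u₂ + u₁ * u₃ + u₂ * u₃ = 0 := by rw [hσ2, hs0]; ring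
    have hS : u₁ + u₂ + u₃ = 0 := hs0
    have hcube : u₁ ^ 3 = u₂ ^ 3 := by
      linear_combination (u₁ - u₂) * ((u₁ + u₂) * hS - hσ20)
    -- 3 ∣ q - 1
    obtain ⟨k, hk⟩ := hm
    have hq4 : q = 4 ^ k := by rw [hq, hk, ← two_mul, pow_mul]; norm_num
    have h3dvd : 3 ∣ q - 1 := by
      rw [hq4]
      have : 4 ^ k % 3 = 1 := by
        rw [Nat.pow_mod]; simp
      omega
    obtain ⟨t, ht⟩ := h3dvd
    have hq1' : (1 : ℕ) ≤ q := Nat.one_le_iff_ne_zero.mpr hqne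
    have hq2eq : q + 2 = 3 * (t + 1) := by omega
    have : u₁ = u₂ := by
      have e1 : u₁ ^ (q + 2) = u₁ := by
        rw [show q + 2 = (q + 1) + 1 by ring, pow_succ, h1, one_mul]
      have e2 : u₂ ^ (q + 2) = u₂ := by
        rw [show q + 2 = (q + 1) + 1 by ring, pow_succ, h2, one_mul]
      calc u₁ = u₁ ^ (q + 2) := e1.symm
        _ = (u₁ ^ 3) ^ (t + 1) := by rw [← pow_mul, hq2eq]
        _ = (u₂ ^ 3) ^ (t + 1) := by rw [hcube]
        _ = u₂ ^ (q + 2) := by rw [← pow_mul, hq2eq]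
        _ = u₂ := e2
    exact h12 this
  · -- s ≠ 0 : then σ₃ = s³ and all uᵢ = s, contradiction
    have hσ3 : u₁ * u₂ * u₃ = s ^ 3 := by
      have h4 : s * (s ^ 3) = s * (u₁ * u₂ * u₃) := by
        rw [← h2σ, hσ2]; ring
      exact (mul_left_cancel₀ hsne h4).symm
    have hc1 : (u₁ + s) ^ 3 = 0 := by
      linear_combination u₁ * hσ2 + hσ3 + (u₃^3 + 3*u₂*u₃^2 + 3*u₂^2*u₃ + u₂^3 + 5*u₁*u₃^2
        + 9*u₁*u₂*u₃ + 5*u₁*u₂^2 + 8*u₁^2*u₃ + 8*u₁^2*u₂ + 5*u₁^3) * h2F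
    have hc2 : (u₂ + s) ^ 3 = 0 := by
      linear_combination u₂ * hσ2 + hσ3 + (u₃^3 + 5*u₂*u₃^2 + 8*u₂^2*u₃ + 5*u₂^3 + 3*u₁*u₃^2
        + 9*u₁*u₂*u₃ + 8*u₁*u₂^2 + 3*u₁^2*u₃ + 5*u₁^2*u₂ + u₁^3) * h2F
    have e1 : u₁ + s = 0 := pow_eq_zero_iff (by norm_num) |>.mp hc1
    have e2 : u₂ + s = 0 := pow_eq_zero_iff (by norm_num) |>.mp hc2
    have : u₁ = u₂ := by linear_combination e1 - e2
    exact h12 this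

/-- Let `q = 2^m` with `m` even, and let `u₁, u₂, u₃` be three distinct `(q+1)`-th roots of
unity in `GF(q^2)`. Then `σ₁² + σ₂ ≠ 0` and `σ₂² + σ₁σ₃ ≠ 0`. -/
theorem stmt9 (m q : ℕ) (hm : Even m) (hq : q = 2 ^ m) (F : Type*) [Field F] [Fintype F]
    (hF : Fintype.card F = q ^ 2) (u₁ u₂ u₃ : F)
    (h1 : u₁ ^ (q + 1) = 1) (h2 : u₂ ^ (q + 1) = 1) (h3 : u₃ ^ (q + 1) = 1)
    (h12 : u₁ ≠ u₂) (h13 : u₁ ≠ u₃) (h23 : u₂ ≠ u₃) :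
    (u₁ + u₂ + u₃) ^ 2 + (u₁ * u₂ + u₁ * u₃ + u₂ * u₃) ≠ 0 ∧
      (u₁ * u₂ + u₁ * u₃ + u₂ * u₃) ^ 2 + (u₁ + u₂ + u₃) * (u₁ * u₂ * u₃) ≠ 0 := by
  -- setup: char 2 etc (as in key9)
  rcases Nat.eq_zero_or_pos m with hm0 | hmpos
  · exfalso
    have : (1 : ℕ) < Fintype.card F := Fintype.one_lt_card
    rw [hF, hq, hm0] at this
    norm_num at this
  haveI hfact2 : Fact (Nat.Prime 2) := ⟨Nat.prime_two⟩
  haveI : CharP F (ringChar F) := ringChar.charP F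
  have hchar2 : ringChar F = 2 := by
    obtain ⟨n, hp, hcard⟩ := FiniteField.card F (ringChar F)
    have hdvd : ringChar F ∣ 2 ^ (m * 2) := by
      have : (ringChar F) ^ (n : ℕ) = 2 ^ (m * 2) := by
        rw [← hcard, hF, hq, ← pow_mul]
      exact this ▸ dvd_pow_self (ringChar F) n.ne_zero
    exact (Nat.prime_dvd_prime_iff_eq hp Nat.prime_two).mp (hp.dvd_of_dvd_pow hdvd)
  haveI hC2 : CharP F 2 := hchar2 ▸ ringChar.charP F
  have h2F : (2 : F) = 0 := CharP.cast_eq_zero F 2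
  have hqne : q ≠ 0 := by rw [hq]; positivity
  have hfrob : ∀ x y : F, (x + y) ^ q = x ^ q + y ^ q := by
    intro x y
    rw [hq]
    exact add_pow_char_pow x y 2 m
  constructor
  · exact key9 m q hm hq F hF u₁ u₂ u₃ h1 h2 h3 h12 h13 h23
  · -- apply key9 to the inverses (the q-th powers)
    intro hcon
    -- Frobenius is injective
    have hinj : ∀ x y : F, x ^ q = y ^ q → x = y := by
      intro x y hxy
      have : (x + y) ^ q = 0 := by rw [hfrob, hxy]; linear_combination y^q * h2F
      have hxy0 : x + y = 0 := pow_eq_zero_iff hqne |>.mp this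
      linear_combination hxy0 - y * h2F
    have hv1 : (u₁ ^ q) ^ (q + 1) = 1 := by rw [pow_right_comm, h1, one_pow]
    have hv2 : (u₂ ^ q) ^ (q + 1) = 1 := by rw [pow_right_comm, h2, one_pow]
    have hv3 : (u₃ ^ q) ^ (q + 1) = 1 := by rw [pow_right_comm, h3, one_pow]
    have hv12 : u₁ ^ q ≠ u₂ ^ q := fun h => h12 (hinj _ _ h)
    have hv13 : u₁ ^ q ≠ u₃ ^ q := fun h => h13 (hinj _ _ h)
    have hv23 : u₂ ^ q ≠ u₃ ^ q := fun h => h23 (hinj _ _ h)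
    have hkey := key9 m q hm hq F hF (u₁ ^ q) (u₂ ^ q) (u₃ ^ q) hv1 hv2 hv3 hv12 hv13 hv23
    apply hkey
    -- show (σ₁^q)² + σ₂^q = 0 using σ₂² + σ₁σ₃ = 0 and σ₃ ≠ 0
    have hq1 : u₁ ^ q * u₁ = 1 := by rw [← pow_succ]; exact h1
    have hq2 : u₂ ^ q * u₂ = 1 := by rw [← pow_succ]; exact h2
    have hq3 : u₃ ^ q * u₃ = 1 := by rw [← pow_succ]; exact h3
    have hA : (u₁ + u₂ + u₃) ^ q * (u₁ * u₂ * u₃) = u₁ * u₂ + u₁ * u₃ + u₂ * u₃ := by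
      rw [hfrob, hfrob]
      linear_combination (u₂ * u₃) * hq1 + (u₁ * u₃) * hq2 + (u₁ * u₂) * hq3
    have hB : (u₁ * u₂ + u₁ * u₃ + u₂ * u₃) ^ q * (u₁ * u₂ * u₃) = u₁ + u₂ + u₃ := by
      rw [hfrob, hfrob, mul_pow, mul_pow, mul_pow]
      linear_combination (u₃ * (u₂ ^ q) * u₂ + u₂ * (u₃ ^ q) * u₃) * hq1
        + (u₃ + u₁ * (u₃ ^ q) * u₃) * hq2 + (u₂ + u₁) * hq3
    have hσ3ne : u₁ * u₂ * u₃ ≠ 0 := by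
      have n1 : u₁ ≠ 0 := by
        intro h; rw [h, zero_pow (by omega)] at h1; exact zero_ne_one h1
      have n2 : u₂ ≠ 0 := by
        intro h; rw [h, zero_pow (by omega)] at h2; exact zero_ne_one h2
      have n3 : u₃ ≠ 0 := by
        intro h; rw [h, zero_pow (by omega)] at h3; exact zero_ne_one h3
      exact mul_ne_zero (mul_ne_zero n1 n2) n3
    -- expand goal for the v's
    have expand1 : (u₁ ^ q + u₂ ^ q + u₃ ^ q) = (u₁ + u₂ + u₃) ^ q := by
      rw [hfrob, hfrob]
    have expand2 : u₁ ^ q * u₂ ^ q + u₁ ^ q * u₃ ^ q + u₂ ^ q * u₃ ^ q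
        = (u₁ * u₂ + u₁ * u₃ + u₂ * u₃) ^ q := by
      rw [hfrob, hfrob, mul_pow, mul_pow, mul_pow]
    rw [expand2, show (u₁ ^ q + u₂ ^ q + u₃ ^ q) ^ 2 = ((u₁ + u₂ + u₃) ^ q) ^ 2 by
      rw [expand1]]
    -- it suffices to show the product with σ₃² is zero
    have hmain : (((u₁ + u₂ + u₃) ^ q) ^ 2 + (u₁ * u₂ + u₁ * u₃ + u₂ * u₃) ^ q)
        * (u₁ * u₂ * u₃) ^ 2 = 0 := by
      calc (((u₁ + u₂ + u₃) ^ q) ^ 2 + (u₁ * u₂ + u₁ * u₃ + u₂ * u₃) ^ q)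
            * (u₁ * u₂ * u₃) ^ 2
          = ((u₁ + u₂ + u₃) ^ q * (u₁ * u₂ * u₃)) ^ 2
            + ((u₁ * u₂ + u₁ * u₃ + u₂ * u₃) ^ q * (u₁ * u₂ * u₃)) * (u₁ * u₂ * u₃) := by
            ring
        _ = (u₁ * u₂ + u₁ * u₃ + u₂ * u₃) ^ 2 + (u₁ + u₂ + u₃) * (u₁ * u₂ * u₃) := by
            rw [hA, hB]
        _ = 0 := hcon
    rcases mul_eq_zero.mp hmain with h | h
    · exact h
    · exact absurd (pow_eq_zero_iff (by norm_num) |>.mp h) hσ3ne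
end

section
/- Let q = 2^m with m ≥ 2, and let (a, b) ∈ GF(q^2)^2 be nonzero. Define f(u) = Tr_{q^2/q}(a u^5 + b u^3) for u ∈ U_{q+1}, where Tr_{q^2/q}(x) = x + x^q. Then f has at most 5 zeros in U_{q+1}. -/
/-- Let `q = 2^m` with `q ≥ 2` and `(a, b) ∈ GF(q²)² \ {(0,0)}`. The function
`f(u) = Tr_{q²/q}(a u⁵ + b u³) = (a u⁵ + b u³) + (a u⁵ + b u³)^q` has at most 5 zeros
in `U_{q+1}`. -/
theorem stmt12 (m q : ℕ) (hm : 2 ≤ m) (hq : q = 2 ^ m) (F : Type*) [Field F] [Fintype F]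
    [DecidableEq F] (hF : Fintype.card F = q ^ 2) (a b : F) (hab : (a, b) ≠ (0, 0)) :
    (Finset.univ.filter (fun u : F => u ^ (q + 1) = 1 ∧
        (a * u ^ 5 + b * u ^ 3) + (a * u ^ 5 + b * u ^ 3) ^ q = 0)).card ≤ 5 := by
  classical
  have hq2 : q ^ 2 = 2 ^ (2 * m) := by subst hq; rw [← pow_mul]; ring_nf
  -- characteristic 2
  obtain ⟨k, hkprime, hkcard⟩ := FiniteField.card F (ringChar F)
  have h2 : ringChar F = 2 := by
    have hdvd : ringChar F ∣ 2 ^ (2 * m) := by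
      rw [← hq2, ← hF, hkcard]
      exact dvd_pow_self _ k.2.ne'
    have := hkprime.dvd_of_dvd_pow hdvd
    exact (Nat.prime_dvd_prime_iff_eq hkprime Nat.prime_two).mp this
  haveI hchar : CharP F 2 := h2 ▸ ringChar.charP F
  set n : ℕ := 2 ^ (2 * m - 1) with hn
  have hsq : ∀ x : F, (x ^ n) ^ 2 = x := by
    intro x
    rw [← pow_mul, hn, ← pow_succ]
    have : 2 * m - 1 + 1 = 2 * m := by omega
    rw [this, ← hq2, ← hF, FiniteField.pow_card]
  set A := a ^ n with hA
  set B := b ^ n with hB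
  set C := (b ^ q) ^ n with hC
  set D := (a ^ q) ^ n with hD
  set P : Polynomial F := Polynomial.C A * Polynomial.X ^ 5 + Polynomial.C B * Polynomial.X ^ 4
      + Polynomial.C C * Polynomial.X + Polynomial.C D with hP
  have hcoeff5 : P.coeff 5 = A := by
    simp [hP, Polynomial.coeff_X_pow, Polynomial.coeff_X]
  have hcoeff4 : P.coeff 4 = B := by
    simp [hP, Polynomial.coeff_X_pow, Polynomial.coeff_X]
  have hPne : P ≠ 0 := by
    have hab' : a ≠ 0 ∨ b ≠ 0 := by
      by_contra h
      push_neg at h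
      exact hab (by simp [h.1, h.2])
    rcases hab' with ha | hb
    · intro h
      have : A = 0 := by rw [← hcoeff5, h, Polynomial.coeff_zero]
      have : a = 0 := by rw [← hsq a, ← hA, this]; ring
      exact ha this
    · intro h
      have : B = 0 := by rw [← hcoeff4, h, Polynomial.coeff_zero]
      have : b = 0 := by rw [← hsq b, ← hB, this]; ring
      exact hb this
  have hdeg : P.natDegree ≤ 5 := by
    rw [hP]
    apply le_trans (Polynomial.natDegree_add_le _ _)
    simp only [max_le_iff]
    constructor
    · apply le_trans (Polynomial.natDegree_add_le _ _)
      simp only [max_le_iff]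
      constructor
      · apply le_trans (Polynomial.natDegree_add_le _ _)
        simp only [max_le_iff]
        constructor
        · exact le_trans (Polynomial.natDegree_C_mul_le _ _) (by simp)
        · exact le_trans (Polynomial.natDegree_C_mul_le _ _) (by simp)
      · exact le_trans (Polynomial.natDegree_C_mul_le _ _) (by simp)
    · simp
  have hsub : (Finset.univ.filter (fun u : F => u ^ (q + 1) = 1 ∧
        (a * u ^ 5 + b * u ^ 3) + (a * u ^ 5 + b * u ^ 3) ^ q = 0)) ⊆ P.roots.toFinset := by
    intro u hu
    simp only [Finset.mem_filter, Finset.mem_univ, true_and] at hu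
    obtain ⟨hu1, hu2⟩ := hu
    have hune : u ≠ 0 := by
      intro h
      rw [h] at hu1
      simp at hu1
    have huq : u ^ q = u⁻¹ := by
      field_simp
      rw [← pow_succ]
      exact hu1
    -- expand (a u^5 + b u^3)^q
    have hfrob : (a * u ^ 5 + b * u ^ 3) ^ q
        = a ^ q * (u⁻¹) ^ 5 + b ^ q * (u⁻¹) ^ 3 := by
      rw [hq, add_pow_char_pow, mul_pow, mul_pow, ← pow_mul, ← pow_mul,
        mul_comm 5, mul_comm 3, pow_mul, pow_mul, ← hq, huq]
    rw [hfrob] at hu2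
    have key : a * u ^ 10 + b * u ^ 8 + b ^ q * u ^ 2 + a ^ q
        = (a * u ^ 5 + b * u ^ 3 + (a ^ q * (u⁻¹) ^ 5 + b ^ q * (u⁻¹) ^ 3)) * u ^ 5 := by
      field_simp
      ring
    have hz : a * u ^ 10 + b * u ^ 8 + b ^ q * u ^ 2 + a ^ q = 0 := by
      rw [key, hu2, zero_mul]
    have hPeval : P.eval u = 0 := by
      have hsquare : (P.eval u) ^ 2 = 0 := by
        have : P.eval u = A * u ^ 5 + B * u ^ 4 + C * u + D := by
          simp [hP]
        rw [this]
        have expand : (A * u ^ 5 + B * u ^ 4 + C * u + D) ^ 2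
            = A ^ 2 * u ^ 10 + B ^ 2 * u ^ 8 + C ^ 2 * u ^ 2 + D ^ 2 := by
          have h1 : ∀ x y : F, (x + y) ^ 2 = x ^ 2 + y ^ 2 := by
            intro x y
            have h20 : (2:F) = 0 := by
              simpa using CharP.cast_eq_zero F 2
            rw [add_sq, h20]
            ring
          rw [h1, h1, h1]
          ring
        rw [expand, hA, hB, hC, hD, hsq, hsq, hsq, hsq]
        exact hz
      exact pow_eq_zero_iff (n := 2) (by norm_num) |>.mp hsquare
    rw [Multiset.mem_toFinset, Polynomial.mem_roots hPne]
    exact hPeval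
  calc (Finset.univ.filter _).card ≤ P.roots.toFinset.card := Finset.card_le_card hsub
    _ ≤ Multiset.card P.roots := Multiset.toFinset_card_le _
    _ ≤ P.natDegree := Polynomial.card_roots' P
    _ ≤ 5 := hdeg
end

section
/- Let q = 2^m with m ≥ 2 and (a, b) ∈ GF(q^2)^2 \ {(0,0)}. The function f(u) = Tr_{q^2/q}(a u^5 + b u^3) has exactly 5 zeros in U_{q+1} if and only if there exist 5 distinct elements u_1, ..., u_5 ∈ U_{q+1} with σ_{5,2}(u_1,...,u_5) = 0 and a scalar τ ∈ GF(q)* such that a = τ/σ_{5,5}(u_1,...,u_5) and b = τ σ_{5,1}(u_1,...,u_5)^2 / σ_{5,5}(u_1,...,u_5). -/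
open Polynomial


/-- Let `q = 2^m` with `m ≥ 2` and `(a, b) ≠ (0,0)` in `GF(q²)²`. The function
`f(u) = Tr_{q²/q}(a u⁵ + b u³)` has exactly 5 zeros in `U_{q+1}` iff there exist 5
distinct `u₁, …, u₅ ∈ U_{q+1}` with `σ₅,₂ = 0` and `τ ∈ GF(q)*` such that
`a = τ/σ₅,₅` and `b = τ σ₅,₁²/σ₅,₅`. -/
theorem stmt13 (m q : ℕ) (hm : 2 ≤ m) (hq : q = 2 ^ m) (F : Type*) [Field F] [Fintype F]
    [DecidableEq F] (hF : Fintype.card F = q ^ 2) (a b : F) (hab : (a, b) ≠ (0, 0)) :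
    (Finset.univ.filter (fun u : F => u ^ (q + 1) = 1 ∧
        (a * u ^ 5 + b * u ^ 3) + (a * u ^ 5 + b * u ^ 3) ^ q = 0)).card = 5 ↔
      ∃ u₁ u₂ u₃ u₄ u₅ : F,
        u₁ ^ (q + 1) = 1 ∧ u₂ ^ (q + 1) = 1 ∧ u₃ ^ (q + 1) = 1 ∧ u₄ ^ (q + 1) = 1 ∧
        u₅ ^ (q + 1) = 1 ∧
        u₁ ≠ u₂ ∧ u₁ ≠ u₃ ∧ u₁ ≠ u₄ ∧ u₁ ≠ u₅ ∧ u₂ ≠ u₃ ∧ u₂ ≠ u₄ ∧ u₂ ≠ u₅ ∧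
        u₃ ≠ u₄ ∧ u₃ ≠ u₅ ∧ u₄ ≠ u₅ ∧
        (u₁ * u₂ + u₁ * u₃ + u₁ * u₄ + u₁ * u₅ + u₂ * u₃ + u₂ * u₄ + u₂ * u₅ +
          u₃ * u₄ + u₃ * u₅ + u₄ * u₅ = 0) ∧
        ∃ τ : F, τ ≠ 0 ∧ τ ^ q = τ ∧
          a = τ / (u₁ * u₂ * u₃ * u₄ * u₅) ∧
          b = τ * (u₁ + u₂ + u₃ + u₄ + u₅) ^ 2 / (u₁ * u₂ * u₃ * u₄ * u₅) := by

  classical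

  have hqpos : 0 < q := by rw [hq]; positivity
  have hp2 : ringChar F = 2 := by
    obtain ⟨n, hp, hcard⟩ := FiniteField.card F (ringChar F)
    have hdvd : ringChar F ∣ 2 ^ (m * 2) := by
      rw [pow_mul, ← hq, ← hF, hcard]
      exact dvd_pow_self _ n.ne_zero
    exact (Nat.prime_dvd_prime_iff_eq hp Nat.prime_two).mp (hp.dvd_of_dvd_pow hdvd)
  haveI : CharP F 2 := hp2 ▸ ringChar.charP F
  haveI : Fact (Nat.Prime 2) := ⟨Nat.prime_two⟩
  have hfrob : ∀ x y : F, (x + y) ^ q = x ^ q + y ^ q := by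
    subst hq; intro x y; exact add_pow_char_pow x y 2 m
  have hqq : ∀ x : F, (x ^ q) ^ q = x := by
    intro x
    have h : q * q = Fintype.card F := by rw [hF]; ring
    rw [← pow_mul, h, FiniteField.pow_card]
  have hsqrt : ∀ x : F, ∃ y : F, y * y = x := by
    have hinj : Function.Injective (fun y : F => y * y) := by
      intro x y h
      have h2 : (x + y) * (x + y) = 0 := by
        rw [CharTwo.add_mul_self]; simp only at h; rw [h, CharTwo.add_self_eq_zero]
      have h3 := mul_self_eq_zero.mp h2
      rw [add_eq_zero_iff_eq_neg, CharTwo.neg_eq] at h3; exact h3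
    exact fun x => Finite.surjective_of_injective hinj x
  have key : ∀ α β : F, α * α = a → β * β = b → ∀ u : F, u ^ (q + 1) = 1 →
      ((a * u ^ 5 + b * u ^ 3) + (a * u ^ 5 + b * u ^ 3) ^ q = 0 ↔
        α * u ^ 5 + β * u ^ 4 + β ^ q * u + α ^ q = 0) := by
    intro α β hα hβ
    intro u hu
    have hu0 : u ≠ 0 := by
      intro h; rw [h, zero_pow (by omega)] at hu; exact one_ne_zero hu.symm
    have hv : u ^ q * u = 1 := by rw [← pow_succ]; exact hu
    have h2 : (2 : F) = 0 := CharTwo.two_eq_zero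
    set v := u ^ q with hvdef
    have huv5 : u ^ 5 * v ^ 5 = 1 := by
      rw [← mul_pow, mul_comm u v, hv, one_pow]
    have huv3 : u ^ 5 * v ^ 3 = u ^ 2 := by
      have : u ^ 5 * v ^ 3 = (v * u) ^ 3 * u ^ 2 := by ring
      rw [this, hv, one_pow, one_mul]
    have hexp : (a * u ^ 5 + b * u ^ 3) ^ q = a ^ q * v ^ 5 + b ^ q * v ^ 3 := by
      rw [hfrob, mul_pow, mul_pow, hvdef, ← pow_mul, ← pow_mul, ← pow_mul, ← pow_mul,
        Nat.mul_comm 5 q, Nat.mul_comm 3 q]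
    have haq : α ^ q * α ^ q = a ^ q := by rw [← mul_pow, hα]
    have hbq : β ^ q * β ^ q = b ^ q := by rw [← mul_pow, hβ]
    have hmain : u ^ 5 * ((a * u ^ 5 + b * u ^ 3) + (a ^ q * v ^ 5 + b ^ q * v ^ 3)) =
        (α * u ^ 5 + β * u ^ 4 + β ^ q * u + α ^ q) *
          (α * u ^ 5 + β * u ^ 4 + β ^ q * u + α ^ q) := by
      linear_combination (-(u ^ 10)) * hα - u ^ 8 * hβ + a ^ q * huv5 - haq + b ^ q * huv3
        - u ^ 2 * hbq - (α * β * u ^ 9 + α * β ^ q * u ^ 6 + α * α ^ q * u ^ 5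
          + β * β ^ q * u ^ 5 + β * α ^ q * u ^ 4 + α ^ q * β ^ q * u) * h2
    rw [hexp]
    constructor
    · intro h0
      have hz : (α * u ^ 5 + β * u ^ 4 + β ^ q * u + α ^ q) *
          (α * u ^ 5 + β * u ^ 4 + β ^ q * u + α ^ q) = 0 := by rw [← hmain, h0, mul_zero]
      exact mul_self_eq_zero.mp hz
    · intro h0
      have hz : u ^ 5 * ((a * u ^ 5 + b * u ^ 3) + (a ^ q * v ^ 5 + b ^ q * v ^ 3)) = 0 := by
        rw [hmain, h0, mul_zero]
      rcases mul_eq_zero.mp hz with h | h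
      · exact absurd h (pow_ne_zero 5 hu0)
      · exact h
  constructor
  · intro hcard
    obtain ⟨α, hα⟩ := hsqrt a
    obtain ⟨β, hβ⟩ := hsqrt b
    classical
    set S := (Finset.univ.filter (fun u : F => u ^ (q + 1) = 1 ∧
        (a * u ^ 5 + b * u ^ 3) + (a * u ^ 5 + b * u ^ 3) ^ q = 0)) with hSdef
    set P : F[X] := C α * X ^ 5 + C β * X ^ 4 + C (β ^ q) * X + C (α ^ q) with hPdef
    have hmem : ∀ u ∈ S, u ^ (q + 1) = 1 ∧
        (a * u ^ 5 + b * u ^ 3) + (a * u ^ 5 + b * u ^ 3) ^ q = 0 := by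
      intro u hu; rw [hSdef, Finset.mem_filter] at hu; exact hu.2
    have hPeval : ∀ u ∈ S, P.eval u = 0 := by
      intro u hu
      have h := (key α β hα hβ u (hmem u hu).1).mp (hmem u hu).2
      simp only [hPdef, eval_add, eval_mul, eval_pow, eval_C, eval_X]
      exact h
    have hαne : α ≠ 0 := by
      intro hα0
      have hβne : β ≠ 0 := by
        intro hβ0
        exact hab (by rw [← hα, ← hβ, hα0, hβ0]; simp)
      have hP0 : P = 0 := by
        apply Polynomial.eq_zero_of_natDegree_lt_card_of_eval_eq_zero' P S hPeval
        rw [hcard]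
        have hd : P.natDegree ≤ 4 := by
          rw [hPdef, hα0, zero_pow (Nat.pos_iff_ne_zero.mp hqpos), map_zero, zero_mul, zero_add,
            add_zero]
          compute_degree
        omega
      have hc4 := congrArg (fun p => Polynomial.coeff p 4) hP0
      simp only [hPdef, coeff_add, coeff_C_mul, coeff_X_pow, coeff_C, coeff_X,
        Polynomial.coeff_zero] at hc4
      norm_num at hc4
      exact hβne hc4
    -- extract the 5 elements
    have hScard := hcard
    rw [Finset.card_eq_succ] at hcard
    obtain ⟨u₁, t₁, hn1, hins1, hct1⟩ := hcard
    rw [Finset.card_eq_succ] at hct1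
    obtain ⟨u₂, t₂, hn2, hins2, hct2⟩ := hct1
    rw [Finset.card_eq_succ] at hct2
    obtain ⟨u₃, t₃, hn3, hins3, hct3⟩ := hct2
    rw [Finset.card_eq_succ] at hct3
    obtain ⟨u₄, t₄, hn4, hins4, hct4⟩ := hct3
    rw [Finset.card_eq_one] at hct4
    obtain ⟨u₅, hins5⟩ := hct4
    subst hins5; subst hins4; subst hins3; subst hins2
    have hSeq : S = {u₁, u₂, u₃, u₄, u₅} := hins1.symm
    simp only [Finset.mem_insert, Finset.mem_singleton, not_or] at hn1 hn2 hn3 hn4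
    obtain ⟨h12, h13, h14, h15⟩ := hn1
    obtain ⟨h23, h24, h25⟩ := hn2
    obtain ⟨h34, h35⟩ := hn3
    have h45 := hn4
    have hm1 : u₁ ∈ S := by rw [hSeq]; simp
    have hm2 : u₂ ∈ S := by rw [hSeq]; simp
    have hm3 : u₃ ∈ S := by rw [hSeq]; simp
    have hm4 : u₄ ∈ S := by rw [hSeq]; simp
    have hm5 : u₅ ∈ S := by rw [hSeq]; simp
    have hU1 := (hmem _ hm1).1
    have hU2 := (hmem _ hm2).1
    have hU3 := (hmem _ hm3).1
    have hU4 := (hmem _ hm4).1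
    have hU5 := (hmem _ hm5).1
    -- the comparison polynomial
    set σ1 := u₁ + u₂ + u₃ + u₄ + u₅ with hσ1def
    set σ2 := u₁*u₂ + u₁*u₃ + u₁*u₄ + u₁*u₅ + u₂*u₃ + u₂*u₄ + u₂*u₅ + u₃*u₄ + u₃*u₅ + u₄*u₅
      with hσ2def
    set σ3 := u₁*u₂*u₃ + u₁*u₂*u₄ + u₁*u₂*u₅ + u₁*u₃*u₄ + u₁*u₃*u₅ + u₁*u₄*u₅
      + u₂*u₃*u₄ + u₂*u₃*u₅ + u₂*u₄*u₅ + u₃*u₄*u₅ with hσ3def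
    set σ4 := u₂*u₃*u₄*u₅ + u₁*u₃*u₄*u₅ + u₁*u₂*u₄*u₅ + u₁*u₂*u₃*u₅ + u₁*u₂*u₃*u₄ with hσ4def
    set σ5 := u₁ * u₂ * u₃ * u₄ * u₅ with hσ5def
    set Q : F[X] := P + C α * ((X + C u₁) * (X + C u₂) * (X + C u₃) * (X + C u₄) * (X + C u₅))
      with hQdef
    have hQform : Q = (C α + C α) * X ^ 5 + C (β + α * σ1) * X ^ 4 + C (α * σ2) * X ^ 3
        + C (α * σ3) * X ^ 2 + C (β ^ q + α * σ4) * X + C (α ^ q + α * σ5) := by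
      rw [hQdef, hPdef, hσ1def, hσ2def, hσ3def, hσ4def, hσ5def]
      simp only [map_add, map_mul]
      ring
    have hCαα : (C α + C α : F[X]) = 0 := by
      rw [← map_add, CharTwo.add_self_eq_zero, map_zero]
    have hQform2 : Q = C (β + α * σ1) * X ^ 4 + C (α * σ2) * X ^ 3
        + C (α * σ3) * X ^ 2 + C (β ^ q + α * σ4) * X + C (α ^ q + α * σ5) := by
      rw [hQform, hCαα, zero_mul, zero_add]
    have hQeval : ∀ u ∈ S, Q.eval u = 0 := by
      intro u hu
      have hP := hPeval u hu
      rw [hSeq] at hu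
      simp only [Finset.mem_insert, Finset.mem_singleton] at hu
      simp only [hQdef, eval_add, eval_mul, eval_X, eval_C, hP]
      rcases hu with rfl | rfl | rfl | rfl | rfl <;>
        · rw [CharTwo.add_self_eq_zero]; ring
    have hQ0 : Q = 0 := by
      apply Polynomial.eq_zero_of_natDegree_lt_card_of_eval_eq_zero' Q S hQeval
      rw [hScard]
      have hd : Q.natDegree ≤ 4 := by
        rw [hQform2]; compute_degree
      omega
    rw [hQ0] at hQform2
    have hcoeff : ∀ k : ℕ, ((0:F[X]).coeff k) =
        (C (β + α * σ1) * X ^ 4 + C (α * σ2) * X ^ 3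
        + C (α * σ3) * X ^ 2 + C (β ^ q + α * σ4) * X + C (α ^ q + α * σ5)).coeff k := by
      intro k; rw [← hQform2]
    have heqz : ∀ x y : F, x + y = 0 → x = y := by
      intro x y h; rwa [add_eq_zero_iff_eq_neg, CharTwo.neg_eq] at h
    have h4 : β = α * σ1 := by
      have h := (hcoeff 4).symm
      simp only [coeff_add, coeff_C_mul, coeff_X_pow, coeff_C, coeff_X, coeff_zero] at h
      norm_num at h
      exact heqz _ _ h
    have h3 : σ2 = 0 := by
      have h := (hcoeff 3).symm
      simp only [coeff_add, coeff_C_mul, coeff_X_pow, coeff_C, coeff_X, coeff_zero] at h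
      norm_num at h
      rcases h with h | h
      · exact absurd h hαne
      · exact h
    have h1 : β ^ q = α * σ4 := by
      have h := (hcoeff 1).symm
      simp only [coeff_add, coeff_C_mul, coeff_X_pow, coeff_C, coeff_X, coeff_zero] at h
      norm_num at h
      exact heqz _ _ h
    have h0 : α ^ q = α * σ5 := by
      have h := (hcoeff 0).symm
      simp only [coeff_add, coeff_C_mul, coeff_X_pow, coeff_C, coeff_X, coeff_zero] at h
      norm_num at h
      exact heqz _ _ h
    -- conclude
    have hUne : ∀ u : F, u ^ (q + 1) = 1 → u ≠ 0 := by
      intro u hu h; rw [h, zero_pow (by omega)] at hu; exact one_ne_zero hu.symm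
    have hσ50 : σ5 ≠ 0 := by
      rw [hσ5def]
      exact mul_ne_zero (mul_ne_zero (mul_ne_zero (mul_ne_zero
        (hUne _ hU1) (hUne _ hU2)) (hUne _ hU3)) (hUne _ hU4)) (hUne _ hU5)
    refine ⟨u₁, u₂, u₃, u₄, u₅, hU1, hU2, hU3, hU4, hU5, h12, h13, h14, h15, h23, h24, h25,
      h34, h35, h45, h3, α * α ^ q, ?_, ?_, ?_, ?_⟩
    · exact mul_ne_zero hαne (by rw [h0]; exact mul_ne_zero hαne hσ50)
    · rw [mul_pow, hqq, mul_comm]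
    · rw [← hσ5def, eq_div_iff hσ50, ← hα, h0]; ring
    · rw [← hσ5def, ← hσ1def, eq_div_iff hσ50, ← hβ, h4, h0]; ring
  · rintro ⟨u₁, u₂, u₃, u₄, u₅, hU1, hU2, hU3, hU4, hU5, h12, h13, h14, h15, h23, h24, h25,
      h34, h35, h45, hs2, τ, hτ0, hτq, ha, hb⟩
    have hUne : ∀ u : F, u ^ (q + 1) = 1 → u ≠ 0 := by
      intro u hu h; rw [h, zero_pow (by omega)] at hu; exact one_ne_zero hu.symm
    have hUinv : ∀ u : F, u ^ (q + 1) = 1 → u ^ q * u = 1 := by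
      intro u hu; rw [← pow_succ]; exact hu
    have h10 := hUne _ hU1; have h20 := hUne _ hU2; have h30 := hUne _ hU3
    have h40 := hUne _ hU4; have h50 := hUne _ hU5
    have hq1 : u₁ ^ q = u₁⁻¹ := eq_inv_of_mul_eq_one_left (hUinv _ hU1)
    have hq2 : u₂ ^ q = u₂⁻¹ := eq_inv_of_mul_eq_one_left (hUinv _ hU2)
    have hq3 : u₃ ^ q = u₃⁻¹ := eq_inv_of_mul_eq_one_left (hUinv _ hU3)
    have hq4 : u₄ ^ q = u₄⁻¹ := eq_inv_of_mul_eq_one_left (hUinv _ hU4)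
    have hq5 : u₅ ^ q = u₅⁻¹ := eq_inv_of_mul_eq_one_left (hUinv _ hU5)
    set σ1 := u₁ + u₂ + u₃ + u₄ + u₅ with hσ1def
    set σ5 := u₁ * u₂ * u₃ * u₄ * u₅ with hσ5def
    set σ3 := u₁*u₂*u₃ + u₁*u₂*u₄ + u₁*u₂*u₅ + u₁*u₃*u₄ + u₁*u₃*u₅ + u₁*u₄*u₅
      + u₂*u₃*u₄ + u₂*u₃*u₅ + u₂*u₄*u₅ + u₃*u₄*u₅ with hσ3def
    set σ4 := u₂*u₃*u₄*u₅ + u₁*u₃*u₄*u₅ + u₁*u₂*u₄*u₅ + u₁*u₂*u₃*u₅ + u₁*u₂*u₃*u₄ with hσ4def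
    have hσ50 : σ5 ≠ 0 := by
      simp only [hσ5def]
      exact mul_ne_zero (mul_ne_zero (mul_ne_zero (mul_ne_zero h10 h20) h30) h40) h50
    have hane : a ≠ 0 := by rw [ha]; exact div_ne_zero hτ0 hσ50
    obtain ⟨α, hα⟩ := hsqrt a
    obtain ⟨β, hβ⟩ := hsqrt b
    have hαne : α ≠ 0 := by intro h; rw [h, mul_zero] at hα; exact hane hα.symm
    have hsqinj : ∀ x y : F, x * x = y * y → x = y := by
      intro x y h
      have h2 : (x + y) * (x + y) = 0 := by
        rw [CharTwo.add_mul_self, h, CharTwo.add_self_eq_zero]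
      have h3 := mul_self_eq_zero.mp h2
      rw [add_eq_zero_iff_eq_neg, CharTwo.neg_eq] at h3; exact h3
    have haσ : a * σ5 = τ := by rw [ha]; field_simp
    have hbσ : b = a * σ1 ^ 2 := by
      rw [hb, ← haσ, hσ1def]; field_simp
    have hσ5q : σ5 ^ q = σ5⁻¹ := by
      apply eq_inv_of_mul_eq_one_left
      have hexp : σ5 ^ q = u₁ ^ q * u₂ ^ q * u₃ ^ q * u₄ ^ q * u₅ ^ q := by
        rw [hσ5def, mul_pow, mul_pow, mul_pow, mul_pow]
      rw [hexp, hq1, hq2, hq3, hq4, hq5, hσ5def]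
      field_simp
    have haq : a ^ q = a * σ5 ^ 2 := by
      have h1 : (a * σ5) ^ q = a * σ5 := by rw [haσ, hτq]
      rw [mul_pow, hσ5q] at h1
      field_simp at h1
      linear_combination h1
    have hαq : α ^ q = α * σ5 := by
      apply hsqinj
      have h1 : α ^ q * α ^ q = a ^ q := by rw [← mul_pow, hα]
      rw [h1, haq]; linear_combination (-(σ5 ^ 2)) * hα
    have hβ1 : β = α * σ1 := by
      apply hsqinj
      rw [hβ, hbσ]; linear_combination (-(σ1 ^ 2)) * hα
    have hv1 := hUinv _ hU1
    have hv2 := hUinv _ hU2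
    have hv3 := hUinv _ hU3
    have hv4 := hUinv _ hU4
    have hv5 := hUinv _ hU5
    have hσ1q : σ5 * σ1 ^ q = σ4 := by
      have hexp : σ1 ^ q = u₁ ^ q + u₂ ^ q + u₃ ^ q + u₄ ^ q + u₅ ^ q := by
        rw [hσ1def, hfrob, hfrob, hfrob, hfrob]
      rw [hexp, hσ5def, hσ4def]
      linear_combination (u₂*u₃*u₄*u₅) * hv1 + (u₁*u₃*u₄*u₅) * hv2 + (u₁*u₂*u₄*u₅) * hv3
        + (u₁*u₂*u₃*u₅) * hv4 + (u₁*u₂*u₃*u₄) * hv5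
    have hβq : β ^ q = α * σ4 := by
      rw [hβ1, mul_pow, hαq]
      linear_combination α * hσ1q
    have hσ3' : σ3 = 0 := by
      have hexp : σ5 * (u₁ * u₂ + u₁ * u₃ + u₁ * u₄ + u₁ * u₅ + u₂ * u₃ + u₂ * u₄ + u₂ * u₅ +
            u₃ * u₄ + u₃ * u₅ + u₄ * u₅) ^ q = σ3 := by
        simp only [hfrob, mul_pow]
        rw [hσ5def, hσ3def]
        linear_combination (u₃*u₄*u₅*(u₂^q*u₂)) * hv1 + (u₃*u₄*u₅) * hv2
          + (u₂*u₄*u₅*(u₃^q*u₃)) * hv1 + (u₂*u₄*u₅) * hv3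
          + (u₂*u₃*u₅*(u₄^q*u₄)) * hv1 + (u₂*u₃*u₅) * hv4
          + (u₂*u₃*u₄*(u₅^q*u₅)) * hv1 + (u₂*u₃*u₄) * hv5
          + (u₁*u₄*u₅*(u₃^q*u₃)) * hv2 + (u₁*u₄*u₅) * hv3
          + (u₁*u₃*u₅*(u₄^q*u₄)) * hv2 + (u₁*u₃*u₅) * hv4
          + (u₁*u₃*u₄*(u₅^q*u₅)) * hv2 + (u₁*u₃*u₄) * hv5
          + (u₁*u₂*u₅*(u₄^q*u₄)) * hv3 + (u₁*u₂*u₅) * hv4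
          + (u₁*u₂*u₄*(u₅^q*u₅)) * hv3 + (u₁*u₂*u₄) * hv5
          + (u₁*u₂*u₃*(u₅^q*u₅)) * hv4 + (u₁*u₂*u₃) * hv5
      rw [← hexp, hs2, zero_pow (by omega), mul_zero]
    have hfac : ∀ u : F, α * u ^ 5 + β * u ^ 4 + β ^ q * u + α ^ q
        = α * (u + u₁) * (u + u₂) * (u + u₃) * (u + u₄) * (u + u₅) := by
      intro u
      rw [hβq, hβ1, hαq, hσ4def, hσ5def, hσ1def]
      linear_combination (-(α * u ^ 3)) * hs2 - (α * u ^ 2) * hσ3'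
    have hSeq : (Finset.univ.filter (fun u : F => u ^ (q + 1) = 1 ∧
          (a * u ^ 5 + b * u ^ 3) + (a * u ^ 5 + b * u ^ 3) ^ q = 0))
        = {u₁, u₂, u₃, u₄, u₅} := by
      ext u
      simp only [Finset.mem_filter, Finset.mem_univ, true_and, Finset.mem_insert,
        Finset.mem_singleton]
      constructor
      · rintro ⟨hu, hf⟩
        have h0 := (key α β hα hβ u hu).mp hf
        rw [hfac u] at h0
        have := mul_eq_zero.mp h0
        have heq : ∀ x y : F, x + y = 0 → x = y := by
          intro x y h; rwa [add_eq_zero_iff_eq_neg, CharTwo.neg_eq] at h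
        rcases this with h | h
        · rcases mul_eq_zero.mp h with h | h
          · rcases mul_eq_zero.mp h with h | h
            · rcases mul_eq_zero.mp h with h | h
              · rcases mul_eq_zero.mp h with h | h
                · exact absurd h hαne
                · exact Or.inl (heq _ _ h)
              · exact Or.inr (Or.inl (heq _ _ h))
            · exact Or.inr (Or.inr (Or.inl (heq _ _ h)))
          · exact Or.inr (Or.inr (Or.inr (Or.inl (heq _ _ h))))
        · exact Or.inr (Or.inr (Or.inr (Or.inr (heq _ _ h))))
      · have hz : ∀ w : F, w ^ (q + 1) = 1 →
            α * (w + u₁) * (w + u₂) * (w + u₃) * (w + u₄) * (w + u₅) = 0 →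
            w ^ (q + 1) = 1 ∧
              (a * w ^ 5 + b * w ^ 3) + (a * w ^ 5 + b * w ^ 3) ^ q = 0 := by
          intro w hw h0
          exact ⟨hw, (key α β hα hβ w hw).mpr (by rw [hfac w]; exact h0)⟩
        rintro (rfl | rfl | rfl | rfl | rfl)
        · exact hz _ hU1 (by rw [CharTwo.add_self_eq_zero]; ring)
        · exact hz _ hU2 (by rw [CharTwo.add_self_eq_zero]; ring)
        · exact hz _ hU3 (by rw [CharTwo.add_self_eq_zero]; ring)
        · exact hz _ hU4 (by rw [CharTwo.add_self_eq_zero]; ring)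
        · exact hz _ hU5 (by rw [CharTwo.add_self_eq_zero]; ring)
    rw [hSeq]
    rw [Finset.card_insert_of_notMem (by simp [h12, h13, h14, h15]),
      Finset.card_insert_of_notMem (by simp [h23, h24, h25]),
      Finset.card_insert_of_notMem (by simp [h34, h35]),
      Finset.card_insert_of_notMem (by simp [h45]),
      Finset.card_singleton]
end

section
/- Let q = 2^m with m even and let u_1, u_2, u_3 be three distinct (q+1)-th roots of unity in GF(q^2). Then the 4×3 matrix over GF(q^2) whose columns are (u_i^{-5}, u_i^{-3}, u_i^3, u_i^5)^T for i = 1, 2, 3 has rank 3. -/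
lemma detid14 (F : Type*) [Field F] (htwo : (2:F)=0) (u₁ u₂ u₃ : F) :
    (Matrix.of fun (i : Fin 3) (j : Fin 3) =>
        (![u₁, u₂, u₃] j) ^ ((![0, 2, 8] : Fin 3 → ℕ) i)).det =
      ((u₁+u₂)*(u₁+u₃)*(u₂+u₃))^2 * (u₁^2+u₂^2+u₃^2+u₁*u₂+u₁*u₃+u₂*u₃)^2 := by
  rw [Matrix.det_fin_three]
  simp only [Matrix.of_apply, Matrix.cons_val', Matrix.cons_val_zero, Matrix.cons_val_one,
    Matrix.head_cons, Matrix.empty_val', Matrix.cons_val_fin_one, Matrix.head_fin_const,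
    Matrix.cons_val_two, Matrix.tail_cons]
  linear_combination ((0 - 2*u₂^3*u₃^7 - 4*u₂^4*u₃^6 - 5*u₂^5*u₃^5 - 4*u₂^6*u₃^4 - 2*u₂^7*u₃^3 - u₂^8*u₃^2 - u₁*u₂*u₃^8 - 6*u₁*u₂^2*u₃^7 - 16*u₁*u₂^3*u₃^6 - 25*u₁*u₂^4*u₃^5 - 25*u₁*u₂^5*u₃^4 - 16*u₁*u₂^6*u₃^3 - 6*u₁*u₂^7*u₃^2 - u₁*u₂^8*u₃ - u₁^2*u₃^8 - 6*u₁^2*u₂*u₃^7 - 24*u₁^2*u₂^2*u₃^6 - 50*u₁^2*u₂^3*u₃^5 - 63*u₁^2*u₂^4*u₃^4 - 50*u₁^2*u₂^5*u₃^3 - 24*u₁^2*u₂^6*u₃^2 - 6*u₁^2*u₂^7*u₃ - 2*u₁^3*u₃^7 - 16*u₁^3*u₂*u₃^6 - 50*u₁^3*u₂^2*u₃^5 - 84*u₁^3*u₂^3*u₃^4 - 84*u₁^3*u₂^4*u₃^3 - 50*u₁^3*u₂^5*u₃^2 - 16*u₁^3*u₂^6*u₃ - 2*u₁^3*u₂^7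 - 4*u₁^4*u₃^6 - 25*u₁^4*u₂*u₃^5 - 63*u₁^4*u₂^2*u₃^4 - 84*u₁^4*u₂^3*u₃^3 - 63*u₁^4*u₂^4*u₃^2 - 25*u₁^4*u₂^5*u₃ - 4*u₁^4*u₂^6 - 5*u₁^5*u₃^5 - 25*u₁^5*u₂*u₃^4 - 50*u₁^5*u₂^2*u₃^3 - 50*u₁^5*u₂^3*u₃^2 - 25*u₁^5*u₂^4*u₃ - 5*u₁^5*u₂^5 - 4*u₁^6*u₃^4 - 16*u₁^6*u₂*u₃^3 - 24*u₁^6*u₂^2*u₃^2 - 16*u₁^6*u₂^3*u₃ - 4*u₁^6*u₂^4 - 2*u₁^7*u₃^3 - 6*u₁^7*u₂*u₃^2 - 6*u₁^7*u₂^2*u₃ - 2*u₁^7*u₂^3 - u₁^8*u₂*u₃ - u₁^8*u₂^2)) * htwo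

/-- Let `q = 2^m` with `m` even, and `u₁, u₂, u₃` distinct `(q+1)`-th roots of unity in
`GF(q²)`. Then the `4 × 3` matrix with columns `(uᵢ⁻⁵, uᵢ⁻³, uᵢ³, uᵢ⁵)ᵀ` has rank 3. -/
theorem stmt14 (m q : ℕ) (hm : Even m) (hm0 : 1 ≤ m) (hq : q = 2 ^ m) (F : Type*) [Field F]
    [Fintype F] (hF : Fintype.card F = q ^ 2) (u₁ u₂ u₃ : F)
    (h1 : u₁ ^ (q + 1) = 1) (h2 : u₂ ^ (q + 1) = 1) (h3 : u₃ ^ (q + 1) = 1)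
    (h12 : u₁ ≠ u₂) (h13 : u₁ ≠ u₃) (h23 : u₂ ≠ u₃) :
    (Matrix.of fun (i : Fin 4) (j : Fin 3) =>
        (![u₁, u₂, u₃] j) ^ ((![-5, -3, 3, 5] : Fin 4 → ℤ) i)).rank = 3 := by
  -- characteristic 2
  have hcard : Fintype.card F = 2 ^ (2*m) := by rw [hF, hq, ← pow_mul, mul_comm]
  haveI : CharP F (ringChar F) := ringChar.charP F
  have hp : (ringChar F).Prime := CharP.char_is_prime F (ringChar F)
  have hchar : ringChar F = 2 := by
    have hdvd : (ringChar F) ∣ Fintype.card F :=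
      (CharP.cast_eq_zero_iff F (ringChar F) _).mp (FiniteField.cast_card_eq_zero F)
    rw [hcard] at hdvd
    exact (Nat.prime_dvd_prime_iff_eq hp Nat.prime_two).mp (hp.dvd_of_dvd_pow hdvd)
  haveI hC2 : CharP F 2 := hchar ▸ ringChar.charP F
  have htwo : (2:F) = 0 := by
    have := CharP.cast_eq_zero F 2
    exact_mod_cast this
  haveI : ExpChar F 2 := ExpChar.prime Nat.prime_two
  have hq0 : q ≠ 0 := by rw [hq]; positivity
  have n1 : u₁ ≠ 0 := by intro h; rw [h, zero_pow (by omega)] at h1; exact zero_ne_one h1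
  have n2 : u₂ ≠ 0 := by intro h; rw [h, zero_pow (by omega)] at h2; exact zero_ne_one h2
  have n3 : u₃ ≠ 0 := by intro h; rw [h, zero_pow (by omega)] at h3; exact zero_ne_one h3
  have hqpow : ∀ a b : F, (a + b)^q = a^q + b^q := fun a b => by
    rw [hq]; exact add_pow_expChar_pow a b 2 m
  have hi1 : u₁ ^ q = u₁⁻¹ := eq_inv_of_mul_eq_one_left (by rw [← pow_succ]; exact h1)
  have hi2 : u₂ ^ q = u₂⁻¹ := eq_inv_of_mul_eq_one_left (by rw [← pow_succ]; exact h2)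
  have hi3 : u₃ ^ q = u₃⁻¹ := eq_inv_of_mul_eq_one_left (by rw [← pow_succ]; exact h3)
  -- the key quantity is nonzero
  have hSne : u₁^2+u₂^2+u₃^2+u₁*u₂+u₁*u₃+u₂*u₃ ≠ 0 := by
    intro hS
    have e1 : (u₁^2)^q = (u₁⁻¹)^2 := by rw [← pow_mul, mul_comm, pow_mul, hi1]
    have e2 : (u₂^2)^q = (u₂⁻¹)^2 := by rw [← pow_mul, mul_comm, pow_mul, hi2]
    have e3 : (u₃^2)^q = (u₃⁻¹)^2 := by rw [← pow_mul, mul_comm, pow_mul, hi3]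
    have e12 : (u₁*u₂)^q = u₁⁻¹*u₂⁻¹ := by rw [mul_pow, hi1, hi2]
    have e13 : (u₁*u₃)^q = u₁⁻¹*u₃⁻¹ := by rw [mul_pow, hi1, hi3]
    have e23 : (u₂*u₃)^q = u₂⁻¹*u₃⁻¹ := by rw [mul_pow, hi2, hi3]
    have h0 : (u₁⁻¹)^2+(u₂⁻¹)^2+(u₃⁻¹)^2+u₁⁻¹*u₂⁻¹+u₁⁻¹*u₃⁻¹+u₂⁻¹*u₃⁻¹ = 0 := by
      rw [← e1, ← e2, ← e3, ← e12, ← e13, ← e23, ← hqpow, ← hqpow, ← hqpow, ← hqpow, ← hqpow,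
        hS, zero_pow hq0]
    have hv1 : u₁ * u₁⁻¹ = 1 := mul_inv_cancel₀ n1
    have hv2 : u₂ * u₂⁻¹ = 1 := mul_inv_cancel₀ n2
    have hv3 : u₃ * u₃⁻¹ = 1 := mul_inv_cancel₀ n3
    have hT : (u₂*u₃)^2+(u₁*u₃)^2+(u₁*u₂)^2+u₁*u₂*u₃^2+u₁*u₂^2*u₃+u₁^2*u₂*u₃ = 0 := by
      linear_combination (u₁*u₂*u₃)^2 * h0 +
        (0 - u₂^2*u₃^2 - u₁*u₂^2*u₃^2*u₃⁻¹ - u₁*u₂^2*u₃^2*u₂⁻¹ - u₁*u₂^2*u₃^2*u₁⁻¹) * hv1 +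
        (0 - u₁*u₂*u₃^2 - u₁^2*u₃^2 - u₁^2*u₂*u₃^2*u₃⁻¹ - u₁^2*u₂*u₃^2*u₂⁻¹) * hv2 +
        (0 - u₁*u₂^2*u₃ - u₁^2*u₂*u₃ - u₁^2*u₂^2 - u₁^2*u₂^2*u₃*u₃⁻¹) * hv3
    rcases eq_or_ne (u₁+u₂+u₃) 0 with hs1 | hs1
    · -- u₁³ = u₂³, so u₁/u₂ is a cube root of unity; but gcd(3, q+1) = 1
      have hz3 : u₁^3 = u₂^3 := by
        linear_combination (u₂*u₃ - u₁*u₃)*hs1 + (u₁ - u₂)*hS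
      have hz : (u₁/u₂)^3 = 1 := by rw [div_pow, hz3, div_self (pow_ne_zero _ n2)]
      have hzq : (u₁/u₂)^(q+1) = 1 := by rw [div_pow, h1, h2, div_one]
      have h3d : orderOf (u₁/u₂) ∣ 3 := orderOf_dvd_of_pow_eq_one hz
      have hqd : orderOf (u₁/u₂) ∣ (q+1) := orderOf_dvd_of_pow_eq_one hzq
      have hcop : Nat.Coprime 3 (q+1) := by
        obtain ⟨k, hk⟩ := hm
        have hmod : 2^(k+k) % 3 = 1 := by
          rw [← two_mul, pow_mul, Nat.pow_mod]; norm_num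
        have hq3 : (q+1) % 3 = 2 := by rw [hq, hk]; omega
        have : ¬ (3 ∣ q+1) := by omega
        exact (Nat.Prime.coprime_iff_not_dvd Nat.prime_three).mpr this
      have hone : u₁/u₂ = 1 :=
        orderOf_eq_one_iff.mp (Nat.dvd_one.mp (hcop ▸ Nat.dvd_gcd h3d hqd))
      exact h12 ((div_eq_one_iff_eq n2).mp hone)
    · -- the uᵢ are all roots of (t + σ₁)³
      have hs2 : u₁*u₂+u₁*u₃+u₂*u₃ = (u₁+u₂+u₃)^2 := by
        linear_combination hS + ((0 - u₃^2 - u₂*u₃ - u₂^2 - u₁*u₃ - u₁*u₂ - u₁^2)) * htwo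
      have hmul : (u₁+u₂+u₃)*(u₁*u₂*u₃) = (u₁+u₂+u₃)*(u₁+u₂+u₃)^3 := by
        linear_combination (u₁^2+u₂^2+u₃^2+u₁*u₂+u₁*u₃+u₂*u₃)*hS + hT +
          ((0 - u₃^4 - 3*u₂*u₃^3 - 5*u₂^2*u₃^2 - 3*u₂^3*u₃ - u₂^4 - 3*u₁*u₃^3 - 8*u₁*u₂*u₃^2 - 8*u₁*u₂^2*u₃ - 3*u₁*u₂^3 - 5*u₁^2*u₃^2 - 8*u₁^2*u₂*u₃ - 5*u₁^2*u₂^2 - 3*u₁^3*u₃ - 3*u₁^3*u₂ - u₁^4)) * htwo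
      have hs3 : u₁*u₂*u₃ = (u₁+u₂+u₃)^3 := mul_left_cancel₀ hs1 hmul
      have hcube : (u₁+u₃)^3 = 0 := by
        linear_combination (-u₂)*hs2 - hs3 +
          ((0 - 2*u₂*u₃^2 - 2*u₂^2*u₃ - u₂^3 - 3*u₁*u₂*u₃ - 2*u₁*u₂^2 - 2*u₁^2*u₂)) * htwo
      have h0' : u₁+u₃ = 0 := pow_eq_zero_iff (n := 3) (by norm_num) |>.mp hcube
      exact h13 (by linear_combination h0' - u₃*htwo)
  have hd12 : u₁+u₂ ≠ 0 := fun h => h12 (by linear_combination h - u₂*htwo)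
  have hd13 : u₁+u₃ ≠ 0 := fun h => h13 (by linear_combination h - u₃*htwo)
  have hd23 : u₂+u₃ ≠ 0 := fun h => h23 (by linear_combination h - u₃*htwo)
  have hdet : (Matrix.of fun (i : Fin 3) (j : Fin 3) =>
      (![u₁, u₂, u₃] j) ^ ((![0, 2, 8] : Fin 3 → ℕ) i)).det ≠ 0 := by
    rw [detid14 F htwo]
    exact mul_ne_zero (pow_ne_zero _ (mul_ne_zero (mul_ne_zero hd12 hd13) hd23))
      (pow_ne_zero _ hSne)
  set M : Matrix (Fin 4) (Fin 3) F := Matrix.of fun (i : Fin 4) (j : Fin 3) =>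
      (![u₁, u₂, u₃] j) ^ ((![-5, -3, 3, 5] : Fin 4 → ℤ) i) with hM
  set D : Matrix (Fin 3) (Fin 3) F := Matrix.diagonal (fun j => (![u₁, u₂, u₃] j)^5) with hD
  set P : Matrix (Fin 3) (Fin 4) F :=
    Matrix.of fun (i : Fin 3) (j : Fin 4) => if j = ⟨i.1, by omega⟩ then 1 else 0 with hP
  have hPmul : ∀ (A : Matrix (Fin 4) (Fin 3) F) (i : Fin 3) (j : Fin 3),
      (P * A) i j = A ⟨i.1, by omega⟩ j := by
    intro A i j
    simp [hP, Matrix.mul_apply, ite_mul, Finset.sum_ite_eq]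
  have hfac : (Matrix.of fun (i : Fin 3) (j : Fin 3) =>
      (![u₁, u₂, u₃] j) ^ ((![0, 2, 8] : Fin 3 → ℕ) i)) = P * (M * D) := by
    ext i j
    rw [hPmul, hD, Matrix.mul_diagonal, hM]
    fin_cases i <;> fin_cases j <;>
      simp only [Matrix.of_apply, Matrix.cons_val', Matrix.cons_val_zero, Matrix.cons_val_one,
        Matrix.head_cons, Matrix.empty_val', Matrix.cons_val_fin_one, Matrix.head_fin_const,
        Matrix.cons_val_two, Matrix.tail_cons, Fin.mk_zero, Fin.mk_one, Fin.isValue,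
        show ((⟨0, by omega⟩ : Fin 3)) = 0 from rfl, show ((⟨1, by omega⟩ : Fin 3)) = 1 from rfl,
        show ((⟨2, by omega⟩ : Fin 3)) = 2 from rfl] <;>
      first
        | (simp only [← zpow_natCast u₁, ← zpow_add₀ n1]; norm_num)
        | (simp only [← zpow_natCast u₂, ← zpow_add₀ n2]; norm_num)
        | (simp only [← zpow_natCast u₃, ← zpow_add₀ n3]; norm_num)
  have hr3 : (P * (M * D)).rank = 3 := by
    rw [← hfac, Matrix.rank_of_isUnit _ ((Matrix.isUnit_iff_isUnit_det _).mpr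
      (isUnit_iff_ne_zero.mpr hdet))]
    simp
  have hle : M.rank ≤ 3 := by simpa using M.rank_le_card_width
  have hge : 3 ≤ M.rank := by
    calc (3:ℕ) = (P * (M * D)).rank := hr3.symm
      _ ≤ (M * D).rank := Matrix.rank_mul_le_right P (M * D)
      _ ≤ M.rank := Matrix.rank_mul_le_left M D
  omega
end
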